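/- arXiv:1003.2978 — 7 statements merged into one kernel-verified Lean document; each statement's English description precedes it below -/
import Mathlib

section
/- Let G be an abelian group and let A be a finite nonempty subset satisfying |A - 2·A| ≤ L|A|, where 2·A := {2a : a ∈ A}. Then for every positive integer k, |A - 2^k·A| ≤ L^k |A|. -/
/-!
Twisting Ruzsa's triangle inequality by an additive map `φ` gives
`|X - φ(Z)| |Y| ≤ |X - φ(Y)| |Y - Z|`: for `d = x - φ z`, each `y ∈ Y` yields a distinct
representation `d = (x - φ y) + φ (y - z)`. With `φ = 2·` and `X = Y = A`, `Z = 2^k·A` this reads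
`|A - 2^{k+1}·A| |A| ≤ |A - 2·A| |A - 2^k·A|`, and induction on `k` gives the bound.
-/

open Finset Pointwise

theorem ruzsa_triangle_inequality_sub_image_sub {G H : Type*} [AddGroup G] [AddGroup H]
    [DecidableEq G] [DecidableEq H] (φ : G →+ H) (X : Finset H) (Y Z : Finset G) :
    #(X - Z.image φ) * #Y ≤ #(X - Y.image φ) * #(Y - Z) := by
  rw [← card_product (X - Y.image φ), ← mul_one #((X - Y.image φ) ×ˢ (Y - Z))]
  refine card_mul_le_card_mul (fun d (p : H × G) ↦ p.1 + φ p.2 = d) (fun d hd ↦ ?_)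
    fun p _ ↦ card_le_one_iff.2 fun hu hv ↦
      ((mem_bipartiteBelow _).1 hu).2.symm.trans ((mem_bipartiteBelow _).1 hv).2
  obtain ⟨x, hx, _, hφz, rfl⟩ := mem_sub.1 hd
  obtain ⟨z, hz, rfl⟩ := mem_image.1 hφz
  refine card_le_card_of_injOn (fun y ↦ (x - φ y, y - z)) (fun y hy ↦ ?_)
    fun y₁ _ y₂ _ h ↦ sub_left_injective (Prod.ext_iff.1 h).2
  rw [mem_coe, mem_bipartiteAbove]
  refine ⟨mk_mem_product (sub_mem_sub hx (mem_image_of_mem _ hy)) (sub_mem_sub hy hz), ?_⟩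
  simp only [map_sub, sub_add_sub_cancel]

theorem card_sub_image_mul_zsmul_mul_card_le {G : Type*} [AddCommGroup G] [DecidableEq G]
    (A : Finset G) (m n : ℤ) :
    #(A - A.image ((m * n) • ·)) * #A ≤ #(A - A.image (m • ·)) * #(A - A.image (n • ·)) := by
  have hφ : ⇑(zsmulAddGroupHom (α := G) m) = (m • ·) := rfl
  have key := ruzsa_triangle_inequality_sub_image_sub (zsmulAddGroupHom m) A A (A.image (n • ·))
  simpa only [hφ, image_image, Function.comp_def, mul_smul] using key

/-- If `|A - 2·A| ≤ L|A|` then `|A - 2^k·A| ≤ L^k|A|` for every positive integer `k`. -/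
theorem stmt5 {G : Type*} [AddCommGroup G] [DecidableEq G] (A : Finset G) (hA : A.Nonempty)
    (L : ℝ) (h : ((A - A.image (fun a => (2 : ℤ) • a)).card : ℝ) ≤ L * A.card)
    (k : ℕ) (hk : 1 ≤ k) :
    ((A - A.image (fun a => ((2 : ℤ) ^ k) • a)).card : ℝ) ≤ L ^ k * A.card := by
  have hA_pos : (0 : ℝ) < #A := by exact_mod_cast hA.card_pos
  induction k, hk using Nat.le_induction with
  | base => simpa using h
  | succ k _ ih =>
    have hstep : (#(A - A.image (((2 : ℤ) ^ (k + 1)) • ·)) : ℝ) * #A ≤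
        #(A - A.image ((2 : ℤ) • ·)) * #(A - A.image (((2 : ℤ) ^ k) • ·)) := by
      rw [pow_succ']
      exact_mod_cast card_sub_image_mul_zsmul_mul_card_le A 2 (2 ^ k)
    refine le_of_mul_le_mul_right ?_ hA_pos
    calc _ ≤ (#(A - A.image ((2 : ℤ) • ·)) : ℝ) * #(A - A.image (((2 : ℤ) ^ k) • ·)) := hstep
      _ ≤ (L * #A) * (L ^ k * #A) := mul_le_mul h ih (by positivity) ((Nat.cast_nonneg _).trans h)
      _ = L ^ (k + 1) * #A * #A := by ring
end

section
/- Let G be an abelian group, let A be a finite nonempty subset satisfying |A + A| ≤ K|A|, and let k be a positive integer. Then |A - 2^k·A| ≤ K^{3k}|A|, where 2^k·A := {2^k a : a ∈ A}. -/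
open Finset Pointwise

private lemma stmt6_step {G : Type*} [AddCommGroup G] [DecidableEq G] (A : Finset G) (k : ℕ) :
    (A - A.image (fun a => ((2 : ℤ) ^ (k+1)) • a)).card * A.card ≤
    (A - A.image (fun a => ((2 : ℤ) ^ k) • a)).card *
      (A - A.image (fun a => ((2 : ℤ) ^ 1) • a)).card := by
  classical
  set D1 := A - A.image (fun a => ((2 : ℤ) ^ 1) • a) with hD1
  set Dk := A - A.image (fun a => ((2 : ℤ) ^ k) • a) with hDk
  set Dk1 := A - A.image (fun a => ((2 : ℤ) ^ (k+1)) • a) with hDk1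
  -- witness choice
  have hwit : ∀ d ∈ Dk1, ∃ p : G × G, p.1 ∈ A ∧ p.2 ∈ A ∧ d = p.1 - ((2:ℤ)^(k+1)) • p.2 := by
    intro d hd
    rw [hDk1, Finset.mem_sub] at hd
    obtain ⟨a, ha, c, hc, hd⟩ := hd
    rw [Finset.mem_image] at hc
    obtain ⟨b, hb, rfl⟩ := hc
    exact ⟨(a, b), ha, hb, hd.symm⟩
  set P : G → Prop := fun d => ∃ p : G × G, p.1 ∈ A ∧ p.2 ∈ A ∧ d = p.1 - ((2:ℤ)^(k+1)) • p.2
    with hP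
  set w : G → G × G := fun d => if h : P d then h.choose else (0, 0) with hw
  have hwspec : ∀ d ∈ Dk1, (w d).1 ∈ A ∧ (w d).2 ∈ A ∧ d = (w d).1 - ((2:ℤ)^(k+1)) • (w d).2 := by
    intro d hd
    have h : P d := hwit d hd
    simp only [hw, dif_pos h]
    exact h.choose_spec
  rw [← Finset.card_product, ← Finset.card_product]
  apply Finset.card_le_card_of_injOn
    (fun p => ((w p.1).1 - ((2:ℤ)^k) • p.2, p.2 - ((2:ℤ)^1) • (w p.1).2))
  · rintro ⟨d, x⟩ hp
    rw [Finset.mem_coe, Finset.mem_product] at hp ⊢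
    obtain ⟨hd, hx⟩ := hp
    obtain ⟨ha, hb, -⟩ := hwspec d hd
    constructor
    · rw [hDk, Finset.mem_sub]
      exact ⟨(w d).1, ha, ((2:ℤ)^k) • x, Finset.mem_image_of_mem _ hx, rfl⟩
    · rw [hD1, Finset.mem_sub]
      exact ⟨x, hx, ((2:ℤ)^1) • (w d).2, Finset.mem_image_of_mem _ hb, rfl⟩
  · rintro ⟨d, x⟩ hp ⟨e, y⟩ hq heq
    simp only [Finset.mem_coe, Finset.mem_product] at hp hq
    simp only [Prod.mk.injEq] at heq
    obtain ⟨h1, h2⟩ := heq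
    -- recover d and e
    have key : ∀ z u t : G, (z - ((2:ℤ)^(k+1)) • u) =
        (z - ((2:ℤ)^k) • t) + ((2:ℤ)^k) • (t - ((2:ℤ)^1) • u) := by
      intro z u t
      have : ((2:ℤ)^k) • (((2:ℤ)^1) • u) = ((2:ℤ)^(k+1)) • u := by
        rw [smul_smul, ← pow_add]
      rw [smul_sub, this]
      abel
    obtain ⟨-, -, hde⟩ := hwspec d hp.1
    obtain ⟨-, -, hee⟩ := hwspec e hq.1
    have hde' : d = ((w d).1 - ((2:ℤ)^k) • x) + ((2:ℤ)^k) • (x - ((2:ℤ)^1) • (w d).2) := by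
      rw [← key]; exact hde
    have hee' : e = ((w e).1 - ((2:ℤ)^k) • y) + ((2:ℤ)^k) • (y - ((2:ℤ)^1) • (w e).2) := by
      rw [← key]; exact hee
    have hdee : d = e := by rw [hde', hee', h1, h2]
    refine Prod.ext hdee ?_
    have h2' : x - ((2:ℤ)^1) • (w e).2 = y - ((2:ℤ)^1) • (w e).2 := by
      rw [← hdee] at h2 ⊢; exact h2
    exact sub_left_inj.mp h2'

private lemma stmt6_base {G : Type*} [AddCommGroup G] [DecidableEq G] (A : Finset G)
    (hA : A.Nonempty) (K : ℝ) (h : (((A + A).card : ℝ)) ≤ K * A.card) :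
    ((A - A.image (fun a => ((2 : ℤ) ^ 1) • a)).card : ℝ) ≤ K ^ 3 * A.card := by
  have hsub : A - A.image (fun a => ((2 : ℤ) ^ 1) • a) ⊆ (1 • A) - (2 • A) := by
    intro z hz
    rw [Finset.mem_sub] at hz
    obtain ⟨a, ha, c, hc, hz⟩ := hz
    rw [Finset.mem_image] at hc
    obtain ⟨b, hb, rfl⟩ := hc
    rw [Finset.mem_sub]
    refine ⟨a, by rwa [one_nsmul], b + b, ?_, ?_⟩
    · rw [two_nsmul]; exact Finset.add_mem_add hb hb
    · rw [← hz]; congr 1; rw [pow_one, two_zsmul]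
  have hpr := Finset.pluennecke_ruzsa_inequality_nsmul_sub_nsmul_add hA A 1 2
  have hA0 : (0 : ℝ) < A.card := by exact_mod_cast Finset.card_pos.mpr hA
  have hK : (0:ℝ) ≤ K := by
    by_contra hK
    push_neg at hK
    have : (((A+A).card : ℝ)) ≤ K * A.card := h
    nlinarith [hA0, (by exact_mod_cast Nat.zero_le (A+A).card : (0:ℝ) ≤ ((A+A).card : ℝ))]
  calc ((A - A.image (fun a => ((2 : ℤ) ^ 1) • a)).card : ℝ)
      ≤ ((1 • A - 2 • A).card : ℝ) := by exact_mod_cast Finset.card_le_card hsub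
    _ ≤ ((((A + A).card / A.card : ℚ≥0) : ℝ)) ^ (1 + 2) * A.card := by
        have := hpr
        have h' : (((1 • A - 2 • A).card : ℚ≥0)) ≤
            (((A + A).card / A.card : ℚ≥0)) ^ (1 + 2) * A.card := this
        exact_mod_cast h'
    _ ≤ K ^ 3 * A.card := by
        have hq : (((((A + A).card : ℚ≥0) / (A.card : ℚ≥0)) : ℚ≥0) : ℝ) ≤ K := by
          rw [NNRat.cast_div, div_le_iff₀ (show (0:ℝ) < ((A.card : ℚ≥0) : ℝ) by
            exact_mod_cast hA0)]
          push_cast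
          exact h
        have h0 : (0:ℝ) ≤ (((((A + A).card : ℚ≥0) / (A.card : ℚ≥0)) : ℚ≥0) : ℝ) := by positivity
        have := pow_le_pow_left₀ h0 hq 3
        calc ((((A + A).card / A.card : ℚ≥0) : ℝ)) ^ (1+2) * A.card
            = ((((A + A).card / A.card : ℚ≥0) : ℝ)) ^ 3 * A.card := by norm_num
          _ ≤ K ^ 3 * A.card := by
              apply mul_le_mul_of_nonneg_right _ (le_of_lt hA0)
              exact this

/-- If `|A + A| ≤ K|A|` then `|A - 2^k·A| ≤ K^{3k}|A|` for every positive integer `k`. -/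
theorem stmt6 {G : Type*} [AddCommGroup G] [DecidableEq G] (A : Finset G) (hA : A.Nonempty)
    (K : ℝ) (h : (((A + A).card : ℝ)) ≤ K * A.card) (k : ℕ) (hk : 1 ≤ k) :
    ((A - A.image (fun a => ((2 : ℤ) ^ k) • a)).card : ℝ) ≤ K ^ (3 * k) * A.card := by
  have hA0 : (0 : ℝ) < A.card := by exact_mod_cast Finset.card_pos.mpr hA
  have hK : (0:ℝ) ≤ K := by
    have hle : A.card ≤ (A + A).card := Finset.card_le_card_add_right hA
    nlinarith [(by exact_mod_cast hle : (A.card:ℝ) ≤ ((A+A).card : ℝ))]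
  induction k, hk using Nat.le_induction with
  | base => simpa using stmt6_base A hA K h
  | succ n hn ih =>
    have hstep := stmt6_step A n
    have hstep' : ((A - A.image (fun a => ((2 : ℤ) ^ (n+1)) • a)).card : ℝ) * A.card ≤
        ((A - A.image (fun a => ((2 : ℤ) ^ n) • a)).card : ℝ) *
        ((A - A.image (fun a => ((2 : ℤ) ^ 1) • a)).card : ℝ) := by exact_mod_cast hstep
    have hbase := stmt6_base A hA K h
    have hDk0 : (0:ℝ) ≤ ((A - A.image (fun a => ((2 : ℤ) ^ n) • a)).card : ℝ) := by positivity
    have hD10 : (0:ℝ) ≤ ((A - A.image (fun a => ((2 : ℤ) ^ 1) • a)).card : ℝ) := by positivity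
    have hchain : ((A - A.image (fun a => ((2 : ℤ) ^ (n+1)) • a)).card : ℝ) * A.card ≤
        (K ^ (3 * n) * A.card) * (K ^ 3 * A.card) :=
      hstep'.trans (mul_le_mul ih hbase hD10 (by positivity))
    rw [← mul_le_mul_iff_of_pos_right hA0]
    calc ((A - A.image (fun a => ((2 : ℤ) ^ (n+1)) • a)).card : ℝ) * A.card
        ≤ (K ^ (3 * n) * A.card) * (K ^ 3 * A.card) := hchain
      _ = K ^ (3 * (n+1)) * A.card * A.card := by
          rw [show 3 * (n + 1) = 3 * n + 3 by ring, pow_add]; ring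
end

section
/- Let X follow a hypergeometric distribution with parameters N, M, k (i.e., P(X = j) = C(M,j)·C(N-M, k-j)/C(N,k)), and let Y follow a binomial distribution with parameters n = k and p = M/N. Then for every real m ≥ 1/2, E|X - kM/N|^{2m} ≤ E|Y - kM/N|^{2m}. -/
/-!
Write `p = M / N` and let `d j` be the binomial minus the hypergeometric weight of `j`. Both
distributions have mass `1` and mean `k p`, so `∑ d j * ℓ j = 0` for every affine `ℓ`.
The likelihood ratio `w j` of the hypergeometric to the binomial weights satisfies
`w (j + 1) / w j = (M - j) (1 - p) / ((N - M - k + j + 1) p)`, which decreases in `j`; hence `w` is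
unimodal and `{j | d j < 0} = {j | 1 < w j}` is an interval of integers. Let `ℓ` be the chord of the
convex function `F = |· - k p| ^ (2m)` over a slightly widened interval: `F - ℓ` is `≤ 0` inside
and `≥ 0` outside, i.e. it has the sign of `d`, so `∑ d j * F j = ∑ d j * (F - ℓ) j ≥ 0`.
-/

open Finset

theorem convexOn_abs_sub_rpow (c : ℝ) {e : ℝ} (he : 1 ≤ e) :
    ConvexOn ℝ Set.univ fun x : ℝ => |x - c| ^ e := by
  refine ⟨convex_univ, fun x _ y _ a b ha hb hab => ?_⟩
  have hdist := (convexOn_univ_dist c).2 (Set.mem_univ x) (Set.mem_univ y) ha hb hab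
  simp only [Real.dist_eq, smul_eq_mul] at hdist ⊢
  calc |a * x + b * y - c| ^ e ≤ (a * |x - c| + b * |y - c|) ^ e :=
        Real.rpow_le_rpow (abs_nonneg _) hdist (by linarith)
    _ ≤ a * |x - c| ^ e + b * |y - c| ^ e :=
        (convexOn_rpow he).2 (Set.mem_Ici.2 (abs_nonneg _)) (Set.mem_Ici.2 (abs_nonneg _)) ha hb hab

theorem ConvexOn.le_chord {F : ℝ → ℝ} (hF : ConvexOn ℝ Set.univ F) {u v x : ℝ}
    (hx : x ∈ Set.Icc u v) : F x ≤ F u + slope F u v * (x - u) := by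
  rcases hx.1.eq_or_lt with rfl | hux
  · simp
  have hslope : slope F u x ≤ slope F u v :=
    hF.slope_mono (Set.mem_univ u) ⟨Set.mem_univ x, hux.ne'⟩
      ⟨Set.mem_univ v, (hux.trans_le hx.2).ne'⟩ hx.2
  have := mul_le_mul_of_nonneg_right hslope (sub_nonneg.2 hux.le)
  rw [slope_def_field, div_mul_cancel₀ _ (sub_ne_zero.2 hux.ne')] at this
  linarith

theorem ConvexOn.chord_le {F : ℝ → ℝ} (hF : ConvexOn ℝ Set.univ F) {u v x : ℝ} (huv : u < v)
    (hx : x ∉ Set.Ioo u v) : F u + slope F u v * (x - u) ≤ F x := by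
  rcases eq_or_ne x u with rfl | hxu
  · simp
  have hsub : x - u ≠ 0 := sub_ne_zero.2 hxu
  have hFx : F x = F u + slope F u x * (x - u) := by
    rw [slope_def_field, div_mul_cancel₀ _ hsub]; ring
  rw [hFx, add_le_add_iff_left]
  have hmono := hF.slope_mono (Set.mem_univ u)
  rcases lt_or_ge x u with hxu' | hux
  · exact mul_le_mul_of_nonpos_right
      (hmono ⟨Set.mem_univ x, hxu⟩ ⟨Set.mem_univ v, huv.ne'⟩ (hxu'.trans huv).le)
      (sub_nonpos.2 hxu'.le)
  · have hvx : v ≤ x := by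
      by_contra! hxv
      exact hx ⟨lt_of_le_of_ne hux (Ne.symm hxu), hxv⟩
    exact mul_le_mul_of_nonneg_right
      (hmono ⟨Set.mem_univ v, huv.ne'⟩ ⟨Set.mem_univ x, hxu⟩ hvx) (sub_nonneg.2 hux)

theorem ConvexOn.sum_mul_le_sum_mul_of_sign_pattern {ι : Type*} {s : Finset ι} {x μ ν : ι → ℝ}
    {F : ℝ → ℝ} (hF : ConvexOn ℝ Set.univ F)
    (hmass : ∑ i ∈ s, μ i = ∑ i ∈ s, ν i) (hmean : ∑ i ∈ s, μ i * x i = ∑ i ∈ s, ν i * x i)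
    {u v : ℝ} (huv : u < v) (hin : ∀ i ∈ s, x i ∈ Set.Ioo u v → ν i ≤ μ i)
    (hout : ∀ i ∈ s, x i ∉ Set.Icc u v → μ i ≤ ν i) :
    ∑ i ∈ s, μ i * F (x i) ≤ ∑ i ∈ s, ν i * F (x i) := by
  set L : ℝ → ℝ := fun y => F u + slope F u v * (y - u)
  have hterm : ∀ i ∈ s, 0 ≤ (ν i - μ i) * (F (x i) - L (x i)) := by
    intro i hi
    by_cases hxi : x i ∈ Set.Ioo u v
    · exact mul_nonneg_of_nonpos_of_nonpos (sub_nonpos.2 (hin i hi hxi))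
        (sub_nonpos.2 (hF.le_chord (Set.Ioo_subset_Icc_self hxi)))
    have hLF : L (x i) ≤ F (x i) := hF.chord_le huv hxi
    by_cases hxi' : x i ∈ Set.Icc u v
    · rw [le_antisymm (hF.le_chord hxi') hLF, sub_self, mul_zero]
    · exact mul_nonneg (sub_nonneg.2 (hout i hi hxi')) (sub_nonneg.2 hLF)
  have hL : ∑ i ∈ s, (ν i - μ i) * L (x i) = 0 := by
    have h : ∀ i, (ν i - μ i) * L (x i) = (F u - slope F u v * u) * (ν i - μ i)
        + slope F u v * (ν i * x i - μ i * x i) := fun i => by simp only [L]; ring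
    simp only [h, sum_add_distrib, ← mul_sum, sum_sub_distrib, hmass, hmean, sub_self, mul_zero,
      add_zero]
  have hsplit : ∑ i ∈ s, ν i * F (x i) - ∑ i ∈ s, μ i * F (x i)
      = ∑ i ∈ s, (ν i - μ i) * (F (x i) - L (x i)) + ∑ i ∈ s, (ν i - μ i) * L (x i) := by
    rw [← sum_add_distrib, ← sum_sub_distrib]
    exact sum_congr rfl fun i _ => by ring
  linarith [sum_nonneg hterm]

theorem Finset.exists_Ioo_natCast_iff_of_ordConnected {S : Finset ℕ}
    (hS : (S : Set ℕ).OrdConnected) :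
    ∃ u v : ℝ, u < v ∧ ∀ j : ℕ, (j : ℝ) ∈ Set.Ioo u v ↔ j ∈ S := by
  rcases S.eq_empty_or_nonempty with rfl | hne
  · exact ⟨-1, 0, by norm_num, fun j => by simp⟩
  refine ⟨S.min' hne - 1, S.max' hne + 1, ?_, fun j => ?_⟩
  · have : (S.min' hne : ℝ) ≤ S.max' hne := Nat.cast_le.2 (S.min'_le_max' hne)
    linarith
  constructor
  · rintro ⟨hu, hv⟩
    exact hS.out (S.min'_mem hne) (S.max'_mem hne)
      ⟨Nat.lt_succ_iff.1 (by exact_mod_cast (by linarith : (S.min' hne : ℝ) < j + 1)),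
        Nat.lt_succ_iff.1 (by exact_mod_cast (by linarith : (j : ℝ) < S.max' hne + 1))⟩
  · intro hj
    have h1 : (S.min' hne : ℝ) ≤ j := Nat.cast_le.2 (S.min'_le j hj)
    have h2 : (j : ℝ) ≤ S.max' hne := Nat.cast_le.2 (S.le_max' j hj)
    constructor <;> linarith

theorem min_le_of_succ_mul_eq_mul {w a b : ℕ → ℝ} {i l : ℕ} (ha : Antitone a) (hb : Monotone b)
    (hw : ∀ r, 0 ≤ w r) (hbpos : ∀ r, i ≤ r → r < l → 0 < b r)
    (hstep : ∀ r, i ≤ r → r < l → w (r + 1) * b r = w r * a r) {j : ℕ} (hij : i ≤ j)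
    (hjl : j ≤ l) : min (w i) (w l) ≤ w j := by
  rcases le_total (a j) (b j) with hab | hba
  · refine min_le_of_right_le (antitoneOn_of_add_one_le Set.ordConnected_Icc
      (fun r _ hr hr1 => ?_) ⟨le_rfl, hjl⟩ ⟨hjl, le_rfl⟩ hjl)
    have hrl : r < l := hr1.2
    refine le_of_mul_le_mul_right ?_ (hbpos r (hij.trans hr.1) hrl)
    rw [hstep r (hij.trans hr.1) hrl]
    exact mul_le_mul_of_nonneg_left ((ha hr.1).trans (hab.trans (hb hr.1))) (hw r)
  · refine min_le_of_left_le (monotoneOn_of_le_add_one Set.ordConnected_Icc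
      (fun r _ hr hr1 => ?_) ⟨le_rfl, hij⟩ ⟨hij, le_rfl⟩ hij)
    have hrl : r < l := (Nat.lt_of_succ_le hr1.2).trans_le hjl
    refine le_of_mul_le_mul_right ?_ (hbpos r hr.1 hrl)
    rw [hstep r hr.1 hrl]
    exact mul_le_mul_of_nonneg_left ((hb hr.2).trans (hba.trans (ha hr.2))) (hw r)

theorem sum_range_choose_mul_natCast_mul {R : Type*} [CommSemiring R] (n K : ℕ) (f : ℕ → R) :
    ∑ j ∈ range (K + 2), ((n + 1).choose j : R) * j * f j
      = (n + 1) * ∑ j ∈ range (K + 1), (n.choose j : R) * f (j + 1) := by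
  rw [sum_range_succ', mul_sum]
  simp only [Nat.cast_zero, mul_zero, zero_mul, add_zero]
  refine sum_congr rfl fun j _ => ?_
  have h := congrArg (Nat.cast (R := R)) (Nat.add_one_mul_choose_eq n j)
  push_cast at h ⊢
  rw [← h]
  ring

theorem sum_range_choose_mul_choose (m n k : ℕ) :
    ∑ j ∈ range (k + 1), m.choose j * n.choose (k - j) = (m + n).choose k := by
  rw [Nat.add_choose_eq, Nat.sum_antidiagonal_eq_sum_range_succ (fun i j => m.choose i * n.choose j)]

noncomputable def binomialWeight (k : ℕ) (p : ℝ) (j : ℕ) : ℝ :=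
  (k.choose j : ℝ) * p ^ j * (1 - p) ^ (k - j)

noncomputable def hypergeometricWeight (N M k j : ℕ) : ℝ :=
  (M.choose j * (N - M).choose (k - j) : ℝ) / (N.choose k : ℝ)

theorem sum_binomialWeight (k : ℕ) (p : ℝ) : ∑ j ∈ range (k + 1), binomialWeight k p j = 1 := by
  have h := add_pow p (1 - p) k
  rw [add_sub_cancel, one_pow] at h
  rw [h]
  exact sum_congr rfl fun j _ => by rw [binomialWeight]; ring

theorem sum_binomialWeight_mul (k : ℕ) (p : ℝ) :
    ∑ j ∈ range (k + 1), binomialWeight k p j * j = k * p := by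
  rcases k with _ | K
  · simp
  calc ∑ j ∈ range (K + 1 + 1), binomialWeight (K + 1) p j * j
      = ∑ j ∈ range (K + 2), ((K + 1).choose j : ℝ) * j * (p ^ j * (1 - p) ^ (K + 1 - j)) :=
        sum_congr rfl fun j _ => by rw [binomialWeight]; ring
    _ = (K + 1) * (p * ∑ j ∈ range (K + 1), binomialWeight K p j) := by
        rw [sum_range_choose_mul_natCast_mul, mul_sum _ _ p]
        congr 1
        refine sum_congr rfl fun j _ => ?_
        rw [binomialWeight, Nat.add_sub_add_right]
        ring
    _ = (K + 1 : ℕ) * p := by push_cast; rw [sum_binomialWeight, mul_one]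

theorem sum_hypergeometricWeight {N M k : ℕ} (hMN : M ≤ N) (hkN : k ≤ N) :
    ∑ j ∈ range (k + 1), hypergeometricWeight N M k j = 1 := by
  have h := congrArg (Nat.cast (R := ℝ)) (sum_range_choose_mul_choose M (N - M) k)
  push_cast at h
  rw [Nat.add_sub_cancel' hMN] at h
  simp only [hypergeometricWeight, ← sum_div, h]
  exact div_self (Nat.cast_ne_zero.2 (Nat.choose_pos hkN).ne')

theorem sum_hypergeometricWeight_mul {N M k : ℕ} (hMN : M ≤ N) (hkN : k ≤ N) :
    ∑ j ∈ range (k + 1), hypergeometricWeight N M k j * j = k * M / N := by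
  rcases k with _ | K
  · simp
  rcases M with _ | M
  · rw [Nat.cast_zero, mul_zero, zero_div]
    refine sum_eq_zero fun j _ => ?_
    rcases j with _ | j <;> simp [hypergeometricWeight]
  obtain ⟨N, rfl⟩ : ∃ N', N = N' + 1 := ⟨N - 1, by omega⟩
  have hvdm := congrArg (Nat.cast (R := ℝ)) (sum_range_choose_mul_choose M (N - M) K)
  push_cast at hvdm
  rw [Nat.add_sub_cancel' (by omega)] at hvdm
  have hpascal := congrArg (Nat.cast (R := ℝ)) (Nat.add_one_mul_choose_eq N K)
  push_cast at hpascal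
  have hC : ((N + 1).choose (K + 1) : ℝ) ≠ 0 := Nat.cast_ne_zero.2 (Nat.choose_pos hkN).ne'
  calc ∑ j ∈ range (K + 1 + 1), hypergeometricWeight (N + 1) (M + 1) (K + 1) j * j
      = (∑ j ∈ range (K + 2), ((M + 1).choose j : ℝ) * j * ((N - M).choose (K + 1 - j) : ℝ))
          / ((N + 1).choose (K + 1) : ℝ) := by
        rw [sum_div]
        exact sum_congr rfl fun j _ => by rw [hypergeometricWeight, Nat.add_sub_add_right]; ring
    _ = (M + 1) * (N.choose K : ℝ) / ((N + 1).choose (K + 1) : ℝ) := by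
        simp only [sum_range_choose_mul_natCast_mul, Nat.add_sub_add_right, hvdm]
    _ = (K + 1 : ℕ) * (M + 1 : ℕ) / (N + 1 : ℕ) := by
        rw [div_eq_div_iff hC (by positivity)]
        push_cast
        linear_combination (M + 1 : ℝ) * hpascal

theorem binomialWeight_pos {k j : ℕ} {p : ℝ} (hp : 0 < p) (hp1 : p < 1) (hj : j ≤ k) :
    0 < binomialWeight k p j := by
  have := Nat.choose_pos hj
  have : 0 < 1 - p := sub_pos.2 hp1
  unfold binomialWeight
  positivity

theorem hypergeometricWeight_nonneg (N M k j : ℕ) : 0 ≤ hypergeometricWeight N M k j := by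
  unfold hypergeometricWeight
  positivity

theorem hypergeometricWeight_eq_zero_of_lt {N M k j : ℕ} (h : N - M < k - j) :
    hypergeometricWeight N M k j = 0 := by
  simp [hypergeometricWeight, Nat.choose_eq_zero_of_lt h]

theorem binomialWeight_succ_mul {k r : ℕ} (hr : r < k) (p : ℝ) :
    binomialWeight k p (r + 1) * (r + 1) * (1 - p) = binomialWeight k p r * (k - r : ℕ) * p := by
  have hk := congrArg (Nat.cast (R := ℝ)) (Nat.choose_succ_right_eq k r)
  push_cast at hk
  have hq : (1 - p) ^ (k - r) = (1 - p) ^ (k - (r + 1)) * (1 - p) := by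
    rw [← pow_succ, show k - (r + 1) + 1 = k - r by omega]
  simp only [binomialWeight, hq]
  linear_combination (p ^ r * p * (1 - p) ^ (k - (r + 1)) * (1 - p)) * hk

theorem hypergeometricWeight_succ_mul {N M k r : ℕ} (hr : r < k) :
    hypergeometricWeight N M k (r + 1) * (r + 1) * (N - M - (k - (r + 1)) : ℕ)
      = hypergeometricWeight N M k r * (M - r : ℕ) * (k - r : ℕ) := by
  have hM := congrArg (Nat.cast (R := ℝ)) (Nat.choose_succ_right_eq M r)
  have hNM := congrArg (Nat.cast (R := ℝ)) (Nat.choose_succ_right_eq (N - M) (k - (r + 1)))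
  rw [show k - (r + 1) + 1 = k - r by omega] at hNM
  push_cast at hM hNM
  simp only [hypergeometricWeight, div_mul_eq_mul_div]
  congr 1
  linear_combination ((N - M).choose (k - (r + 1)) * ((N - M - (k - (r + 1)) : ℕ) : ℝ)) * hM
    - (M.choose r * ((M - r : ℕ) : ℝ)) * hNM

theorem hypergeometricWeight_div_binomialWeight_succ_mul {N M k r : ℕ} (hr : r < k) {p : ℝ}
    (hp : 0 < p) (hp1 : p < 1) :
    hypergeometricWeight N M k (r + 1) / binomialWeight k p (r + 1)
        * ((N - M - (k - (r + 1)) : ℕ) * p)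
      = hypergeometricWeight N M k r / binomialWeight k p r * ((M - r : ℕ) * (1 - p)) := by
  have hb0 := (binomialWeight_pos hp hp1 hr.le).ne'
  have hb1 := (binomialWeight_pos hp hp1 hr).ne'
  have hH := hypergeometricWeight_succ_mul (N := N) (M := M) hr
  have hB := binomialWeight_succ_mul hr p
  have hkr : ((r : ℝ) + 1) * (k - r : ℕ) ≠ 0 := by
    have : 0 < k - r := by omega
    positivity
  rw [div_mul_eq_mul_div, div_mul_eq_mul_div, div_eq_div_iff hb1 hb0]
  refine mul_right_cancel₀ hkr ?_
  linear_combination (p * binomialWeight k p r * (k - r : ℕ)) * hH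
    - (hypergeometricWeight N M k r * (M - r : ℕ) * (k - r : ℕ)) * hB

theorem hypergeometricWeight_zero {N k : ℕ} (hkN : k ≤ N) (j : ℕ) :
    hypergeometricWeight N 0 k j = binomialWeight k 0 j := by
  have hC : (N.choose k : ℝ) ≠ 0 := Nat.cast_ne_zero.2 (Nat.choose_pos hkN).ne'
  rcases j with _ | j <;> simp [hypergeometricWeight, binomialWeight, hC]

theorem hypergeometricWeight_self {N k j : ℕ} (hkN : k ≤ N) (hjk : j ≤ k) :
    hypergeometricWeight N N k j = binomialWeight k 1 j := by
  have hC : (N.choose k : ℝ) ≠ 0 := Nat.cast_ne_zero.2 (Nat.choose_pos hkN).ne'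
  rcases hjk.eq_or_lt with rfl | hjk
  · simp [hypergeometricWeight, binomialWeight, hC]
  · simp [hypergeometricWeight, binomialWeight, Nat.choose_eq_zero_of_lt (Nat.sub_pos_of_lt hjk),
      Nat.sub_ne_zero_of_lt hjk]

theorem ordConnected_binomialWeight_lt_hypergeometricWeight_of_pos {N M k : ℕ} (hM : 0 < M)
    (hMN : M < N) :
    (({j ∈ range (k + 1) | binomialWeight k (M / N) j < hypergeometricWeight N M k j} :
      Finset ℕ) : Set ℕ).OrdConnected := by
  set p : ℝ := M / N
  have hp : 0 < p := div_pos (Nat.cast_pos.2 hM) (Nat.cast_pos.2 (hM.trans hMN))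
  have hp1 : p < 1 := (div_lt_one (Nat.cast_pos.2 (hM.trans hMN))).2 (Nat.cast_lt.2 hMN)
  set w : ℕ → ℝ := fun r => hypergeometricWeight N M k r / binomialWeight k p r
  have hw : ∀ r, r ≤ k → (1 < w r ↔ binomialWeight k p r < hypergeometricWeight N M k r) :=
    fun r hr => one_lt_div (binomialWeight_pos hp hp1 hr)
  refine ⟨fun i hi l hl j hj => ?_⟩
  simp only [coe_filter, mem_range, Set.mem_ofPred_eq, Nat.lt_succ_iff] at hi hl ⊢
  have hik : k - i ≤ N - M := by
    by_contra! h
    have := hypergeometricWeight_eq_zero_of_lt h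
    linarith [binomialWeight_pos hp hp1 hi.1]
  have ha : Antitone fun r => ((M - r : ℕ) : ℝ) * (1 - p) := by
    intro r s h
    dsimp only
    gcongr
  have hb : Monotone fun r => ((N - M - (k - (r + 1)) : ℕ) : ℝ) * p := by
    intro r s h
    dsimp only
    gcongr
  have hwj : min (w i) (w l) ≤ w j := by
    refine min_le_of_succ_mul_eq_mul (w := w) ha hb (fun r => ?_) (fun r hr hrl => ?_)
      (fun r _ hrl => hypergeometricWeight_div_binomialWeight_succ_mul (by omega) hp hp1) hj.1 hj.2
    · have := sub_pos.2 hp1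
      exact div_nonneg (hypergeometricWeight_nonneg ..) (by unfold binomialWeight; positivity)
    · have : 0 < N - M - (k - (r + 1)) := by omega
      positivity
  exact ⟨hj.2.trans hl.1, (hw j (hj.2.trans hl.1)).1
    ((lt_min ((hw i hi.1).2 hi.2) ((hw l hl.1).2 hl.2)).trans_le hwj)⟩

theorem ordConnected_binomialWeight_lt_hypergeometricWeight {N M k : ℕ} (hMN : M ≤ N)
    (hkN : k ≤ N) :
    (({j ∈ range (k + 1) | binomialWeight k (M / N) j < hypergeometricWeight N M k j} :
      Finset ℕ) : Set ℕ).OrdConnected := by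
  rcases Nat.eq_zero_or_pos M with rfl | hM
  · simpa [hypergeometricWeight_zero hkN] using Set.ordConnected_empty
  rcases hMN.eq_or_lt with rfl | hMN
  · rw [filter_false_of_mem fun j hj => ?_, coe_empty]
    · exact Set.ordConnected_empty
    rw [div_self (Nat.cast_ne_zero.2 hM.ne'),
      hypergeometricWeight_self hkN (Nat.lt_succ_iff.1 (mem_range.1 hj))]
    exact lt_irrefl _
  exact ordConnected_binomialWeight_lt_hypergeometricWeight_of_pos hM hMN

theorem stmt9_general (N M k : ℕ) (hMN : M ≤ N) (hkN : k ≤ N) (m : ℝ)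
    (hm : (1 : ℝ) / 2 ≤ m) :
    ∑ j ∈ Finset.range (k + 1),
        ((M.choose j * (N - M).choose (k - j) : ℝ) / (N.choose k : ℝ)) *
          |(j : ℝ) - (k : ℝ) * M / N| ^ (2 * m)
      ≤ ∑ j ∈ Finset.range (k + 1),
        ((k.choose j : ℝ) * ((M : ℝ) / N) ^ j * (1 - (M : ℝ) / N) ^ (k - j)) *
          |(j : ℝ) - (k : ℝ) * M / N| ^ (2 * m) := by
  obtain ⟨u, v, huv, hS⟩ := exists_Ioo_natCast_iff_of_ordConnected
    (ordConnected_binomialWeight_lt_hypergeometricWeight hMN hkN)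
  refine (convexOn_abs_sub_rpow ((k : ℝ) * M / N) (by linarith)).sum_mul_le_sum_mul_of_sign_pattern
    (x := Nat.cast) (μ := hypergeometricWeight N M k) (ν := binomialWeight k (M / N))
    ?_ ?_ huv (fun j _ hj => ?_) (fun j hjk hj => ?_)
  · rw [sum_hypergeometricWeight hMN hkN, sum_binomialWeight]
  · rw [sum_hypergeometricWeight_mul hMN hkN, sum_binomialWeight_mul, mul_div_assoc]
  · exact (mem_filter.1 ((hS j).1 hj)).2.le
  · exact not_lt.1 fun h => hj (Set.Ioo_subset_Icc_self ((hS j).2 (mem_filter.2 ⟨hjk, h⟩)))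

/-- Hoeffding comparison: the `2m`-th central absolute moment of a hypergeometric
distribution with parameters `N, M, k` is at most that of the binomial distribution with
parameters `n = k`, `p = M/N` (moments about `kM/N`), for every real `m ≥ 1/2`. -/
theorem stmt9 (N M k : ℕ) (hN : 0 < N) (hMN : M ≤ N) (hkN : k ≤ N) (m : ℝ)
    (hm : (1 : ℝ) / 2 ≤ m) :
    ∑ j ∈ Finset.range (k + 1),
        ((M.choose j * (N - M).choose (k - j) : ℝ) / (N.choose k : ℝ)) *
          |(j : ℝ) - (k : ℝ) * M / N| ^ (2 * m)
      ≤ ∑ j ∈ Finset.range (k + 1),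
        ((k.choose j : ℝ) * ((M : ℝ) / N) ^ j * (1 - (M : ℝ) / N) ^ (k - j)) *
          |(j : ℝ) - (k : ℝ) * M / N| ^ (2 * m) :=
  stmt9_general N M k hMN hkN m hm
end

section
/- Let m ≥ 1 and suppose X follows a binomial distribution with parameters n and p. Then E|X - np|^{2m} ≤ 2(3mnp + m²)^m. -/
/-!
Exponential-moment method. For `λ > 0` the calculus bound `y ^ s ≤ s ^ s e ^ (y - s)` gives
`|x| ^ s ≤ (s / λ) ^ s e ^ (-s) (e ^ (λ x) + e ^ (-λ x))`, and the binomial moment generating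
function satisfies `E e ^ (c (X - np)) ≤ e ^ (np (e ^ c - 1 - c)) ≤ e ^ (np c ^ 2)` for `|c| ≤ 1`.
With `s = 2m`, `A = 3mnp + m²` and `λ = m / √A` this yields
`E|X - np| ^ (2m) ≤ 2 (4A) ^ m e ^ (npλ² - 2m) ≤ 2 A ^ m (4 e ^ (-5/3)) ^ m ≤ 2 A ^ m`.
-/

open Finset Real

lemma Real.rpow_le_rpow_mul_exp_sub {y s : ℝ} (hy : 0 ≤ y) (hs : 0 < s) :
    y ^ s ≤ s ^ s * exp (y - s) := by
  rcases hy.eq_or_lt with rfl | hy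
  · rw [zero_rpow hs.ne']
    positivity
  have hlog : log y - log s ≤ y / s - 1 := by
    rw [← log_div hy.ne' hs.ne']
    exact log_le_sub_one_of_pos (by positivity)
  have hys : s * (y / s) = y := by field_simp
  rw [rpow_def_of_pos hy, rpow_def_of_pos hs, ← exp_add, exp_le_exp]
  nlinarith [mul_le_mul_of_nonneg_left hlog hs.le]

lemma Real.abs_rpow_le_mul_exp_add_exp {s l : ℝ} (hs : 0 < s) (hl : 0 < l) (x : ℝ) :
    |x| ^ s ≤ (s / l) ^ s * exp (-s) * (exp (l * x) + exp (-(l * x))) := by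
  have hexp : exp (l * |x|) ≤ exp (l * x) + exp (-(l * x)) := by
    rcases abs_cases x with ⟨h, -⟩ | ⟨h, -⟩
    · rw [h]; linarith [exp_pos (-(l * x))]
    · rw [h, mul_neg]; linarith [exp_pos (l * x)]
  calc |x| ^ s = (l * |x|) ^ s / l ^ s := by
        rw [mul_rpow hl.le (abs_nonneg x)]; field_simp
    _ ≤ s ^ s * exp (l * |x| - s) / l ^ s := by
        gcongr; exact rpow_le_rpow_mul_exp_sub (by positivity) hs
    _ = (s / l) ^ s * exp (-s) * exp (l * |x|) := by
        rw [div_rpow hs.le hl.le, sub_eq_neg_add, exp_add]; ring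
    _ ≤ _ := by gcongr

section Binomial

variable {n : ℕ} {p : ℝ}

lemma sum_choose_mul_exp_mul_eq (c : ℝ) :
    ∑ j ∈ range (n + 1), (n.choose j * p ^ j * (1 - p) ^ (n - j)) * exp (c * j)
      = (p * exp c + (1 - p)) ^ n := by
  rw [add_pow]
  refine sum_congr rfl fun j _ => ?_
  rw [mul_pow, ← exp_nat_mul]
  ring_nf

lemma sum_choose_mul_exp_mul_sub_le (hp0 : 0 ≤ p) (hp1 : p ≤ 1) (c : ℝ) :
    ∑ j ∈ range (n + 1), (n.choose j * p ^ j * (1 - p) ^ (n - j)) * exp (c * (j - n * p))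
      ≤ exp (n * p * (exp c - 1 - c)) := by
  have hcentre : ∀ j : ℕ, exp (c * (j - n * p)) = exp (-(c * (n * p))) * exp (c * j) :=
    fun j => by rw [← exp_add]; ring_nf
  have hbase : p * exp c + (1 - p) ≤ exp (p * (exp c - 1)) := by
    linarith [add_one_le_exp (p * (exp c - 1))]
  simp_rw [hcentre, mul_left_comm _ (exp _), ← mul_sum, sum_choose_mul_exp_mul_eq]
  calc exp (-(c * (n * p))) * (p * exp c + (1 - p)) ^ n
      ≤ exp (-(c * (n * p))) * exp (p * (exp c - 1)) ^ n := by
        gcongr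
    _ = exp (n * p * (exp c - 1 - c)) := by
        rw [← exp_nat_mul, ← exp_add]; ring_nf

lemma sum_choose_mul_exp_mul_sub_le_of_abs_le_one (hp0 : 0 ≤ p) (hp1 : p ≤ 1) {c : ℝ}
    (hc : |c| ≤ 1) :
    ∑ j ∈ range (n + 1), (n.choose j * p ^ j * (1 - p) ^ (n - j)) * exp (c * (j - n * p))
      ≤ exp (n * p * c ^ 2) := by
  refine (sum_choose_mul_exp_mul_sub_le hp0 hp1 c).trans (exp_le_exp.mpr ?_)
  gcongr
  exact (le_abs_self _).trans (abs_exp_sub_one_sub_id_le hc)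

lemma sum_choose_mul_abs_rpow_le (hp0 : 0 ≤ p) (hp1 : p ≤ 1) {s l : ℝ} (hs : 0 < s)
    (hl : 0 < l) (hl1 : l ≤ 1) :
    ∑ j ∈ range (n + 1), (n.choose j * p ^ j * (1 - p) ^ (n - j)) * |(j : ℝ) - n * p| ^ s
      ≤ 2 * (s / l) ^ s * exp (n * p * l ^ 2 - s) := by
  have hpos := sum_choose_mul_exp_mul_sub_le_of_abs_le_one (n := n) hp0 hp1
    (c := l) (by rwa [abs_of_pos hl])
  have hneg := sum_choose_mul_exp_mul_sub_le_of_abs_le_one (n := n) hp0 hp1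
    (c := -l) (by rwa [abs_neg, abs_of_pos hl])
  rw [neg_sq] at hneg
  calc _ ≤ ∑ j ∈ range (n + 1), (n.choose j * p ^ j * (1 - p) ^ (n - j)) *
          ((s / l) ^ s * exp (-s) * (exp (l * (j - n * p)) + exp (-l * (j - n * p)))) := by
        gcongr with j
        rw [neg_mul]; exact abs_rpow_le_mul_exp_add_exp hs hl _
    _ = (s / l) ^ s * exp (-s) *
          (∑ j ∈ range (n + 1), (n.choose j * p ^ j * (1 - p) ^ (n - j)) * exp (l * (j - n * p))
          + ∑ j ∈ range (n + 1), (n.choose j * p ^ j * (1 - p) ^ (n - j)) *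
              exp (-l * (j - n * p))) := by
        rw [← sum_add_distrib, mul_sum]
        exact sum_congr rfl fun j _ => by ring
    _ ≤ (s / l) ^ s * exp (-s) * (exp (n * p * l ^ 2) + exp (n * p * l ^ 2)) := by
        gcongr
    _ = 2 * (s / l) ^ s * exp (n * p * l ^ 2 - s) := by
        rw [sub_eq_neg_add, exp_add]; ring

end Binomial

/-- For a binomial random variable `X` with parameters `n, p` and real `m ≥ 1`,
`E|X - np|^{2m} ≤ 2(3mnp + m²)^m`. -/
theorem stmt10 (n : ℕ) (p : ℝ) (hp0 : 0 ≤ p) (hp1 : p ≤ 1) (m : ℝ) (hm : 1 ≤ m) :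
    ∑ j ∈ Finset.range (n + 1),
        ((n.choose j : ℝ) * p ^ j * (1 - p) ^ (n - j)) * |(j : ℝ) - n * p| ^ (2 * m)
      ≤ 2 * (3 * m * n * p + m ^ 2) ^ m := by
  set A := 3 * m * n * p + m ^ 2
  have hnp : 0 ≤ n * p := by positivity
  have hA0 : 0 < A := by positivity
  have hmA : m ≤ √A := le_sqrt_of_sq_le (by nlinarith)
  have hsqrtA : 0 < √A := by positivity
  have hbound := sum_choose_mul_abs_rpow_le (n := n) hp0 hp1 (s := 2 * m) (l := m / √A)
    (by positivity) (by positivity) ((div_le_one hsqrtA).mpr hmA)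
  have hscale : (2 * m / (m / √A)) ^ (2 * m) = 4 ^ m * A ^ m := by
    rw [show 2 * m / (m / √A) = 2 * √A by field_simp, rpow_mul (by positivity), rpow_two,
      mul_pow, sq_sqrt hA0.le, mul_rpow (by norm_num) hA0.le]
    norm_num
  have hexponent : n * p * (m / √A) ^ 2 - 2 * m ≤ (-5 / 3) * m := by
    have : n * p * (m ^ 2 / A) ≤ m / 3 := by
      rw [mul_div_assoc', div_le_iff₀ hA0]; nlinarith
    rw [div_pow, sq_sqrt hA0.le]
    linarith
  have hfour : 4 * exp (-5 / 3) ≤ 1 := by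
    have : 4 ≤ exp (5 / 3) := by linarith [quadratic_le_exp_of_nonneg (x := 5 / 3) (by norm_num)]
    rw [show (-5 / 3 : ℝ) = -(5 / 3) by norm_num, exp_neg, ← div_eq_mul_inv,
      div_le_one (exp_pos _)]
    exact this
  calc _ ≤ 2 * (4 ^ m * A ^ m) * exp ((-5 / 3) * m) := by
        refine hbound.trans ?_
        rw [hscale]; gcongr
    _ = 2 * A ^ m * (4 * exp (-5 / 3)) ^ m := by
        rw [mul_rpow (by norm_num) (exp_pos _).le, ← exp_mul]; ring
    _ ≤ 2 * A ^ m :=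
        mul_le_of_le_one_right (by positivity) (rpow_le_one (by positivity) hfour (by linarith))
end

section
/- Let G be a group, let A, B ⊆ G be finite subsets with B nonempty, and let C ⊆ A be a uniformly random k-element subset with 1 ≤ k ≤ |A|. Then E‖μ_C * 1_B - 1_A * 1_B‖₂² ≤ |A|²|B|/k, where μ_C := (|A|/k)·1_C and ‖f‖₂² := Σ_{x∈G} |f(x)|². -/
/-!
For fixed `x`, the number of representations `x = c * b` with `c ∈ C`, `b ∈ B` is `X = #(S ∩ C)`
with `S = {a ∈ A | a⁻¹ * x ∈ B}`, a hypergeometric variable. Writing `n = #A`, `m = #S`, double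
counting `k`-sets that contain a fixed `j`-set gives the factorial moments
`E (X choose j) = (m choose j) (k choose j) / (n choose j)`, and the first two of them bound the
variance: `E (n X - k m)² ≤ n m k`. Summing over `x` and using `∑ₓ #Sₓ = #A * #B` gives the claim.
-/

open Finset Pointwise

section Hypergeometric

variable {α : Type*} [DecidableEq α] {S A : Finset α}

theorem sum_choose_card_inter_powersetCard (hSA : S ⊆ A) {j k : ℕ} (hjk : j ≤ k) :
    ∑ C ∈ A.powersetCard k, (#(S ∩ C)).choose j = (#S).choose j * (#A - j).choose (k - j) := by
  calc ∑ C ∈ A.powersetCard k, (#(S ∩ C)).choose j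
      = ∑ C ∈ A.powersetCard k, #((S.powersetCard j).bipartiteAbove (fun C T => T ⊆ C) C) := by
        refine sum_congr rfl fun C _ => ?_
        rw [← card_powersetCard, bipartiteAbove]
        congr 1
        ext T
        simp only [mem_powersetCard, subset_inter_iff, mem_filter]
        tauto
    _ = ∑ T ∈ S.powersetCard j, #((A.powersetCard k).filter (T ⊆ ·)) :=
        sum_card_bipartiteAbove_eq_sum_card_bipartiteBelow _
    _ = ∑ T ∈ S.powersetCard j, (#A - j).choose (k - j) := by
        refine sum_congr rfl fun T hT => ?_
        obtain ⟨hTS, rfl⟩ := mem_powersetCard.1 hT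
        exact card_filter_powersetCard_subset T A k (hTS.trans hSA) hjk
    _ = (#S).choose j * (#A - j).choose (k - j) := by
        rw [sum_const, card_powersetCard, smul_eq_mul]

theorem choose_card_mul_sum_choose_card_inter (hSA : S ⊆ A) (j k : ℕ) :
    (#A).choose j * ∑ C ∈ A.powersetCard k, (#(S ∩ C)).choose j
      = (#A).choose k * ((#S).choose j * k.choose j) := by
  rcases le_or_gt j k with hjk | hkj
  · rw [sum_choose_card_inter_powersetCard hSA hjk, mul_left_comm, ← Nat.choose_mul hjk]
    ring
  · have hzero : ∀ C ∈ A.powersetCard k, (#(S ∩ C)).choose j = 0 := fun C hC =>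
      Nat.choose_eq_zero_of_lt <|
        ((card_le_card inter_subset_right).trans (mem_powersetCard.1 hC).2.le).trans_lt hkj
    rw [sum_eq_zero hzero, Nat.choose_eq_zero_of_lt hkj]
    simp

theorem sum_sq_card_mul_card_inter_sub_le (hSA : S ⊆ A) (k : ℕ) :
    ∑ C ∈ A.powersetCard k, ((#A : ℝ) * #(S ∩ C) - k * #S) ^ 2
      ≤ #(A.powersetCard k) * #A * #S * k := by
  have first_moment : (#A : ℝ) * ∑ C ∈ A.powersetCard k, (#(S ∩ C) : ℝ)
      = #(A.powersetCard k) * (#S * k) := by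
    have := choose_card_mul_sum_choose_card_inter hSA 1 k
    simp only [Nat.choose_one_right] at this
    rw [card_powersetCard]
    exact_mod_cast this
  have second_factorial_moment :
      (#A : ℝ) * (#A - 1) * ∑ C ∈ A.powersetCard k, (#(S ∩ C) : ℝ) * (#(S ∩ C) - 1)
        = #(A.powersetCard k) * (#S * (#S - 1) * (k * (k - 1))) := by
    have := congrArg (Nat.cast (R := ℝ)) (choose_card_mul_sum_choose_card_inter hSA 2 k)
    push_cast [Nat.cast_choose_two] at this
    rw [← sum_div] at this
    rw [card_powersetCard]
    linarith
  have factorial_moment_le : (#A : ℝ) * ∑ C ∈ A.powersetCard k, (#(S ∩ C) : ℝ) * (#(S ∩ C) - 1)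
      ≤ (k - 1) * (#(A.powersetCard k) * (#S * k)) := by
    rw [← first_moment, mul_left_comm]
    refine mul_le_mul_of_nonneg_left ?_ (by positivity)
    rw [mul_sum]
    refine sum_le_sum fun C hC => ?_
    have hXk : (#(S ∩ C) : ℝ) ≤ k :=
      mod_cast (card_le_card inter_subset_right).trans (mem_powersetCard.1 hC).2.le
    nlinarith [(by positivity : 0 ≤ (#(S ∩ C) : ℝ))]
  have expand : ∑ C ∈ A.powersetCard k, ((#A : ℝ) * #(S ∩ C) - k * #S) ^ 2
      = (#A : ℝ) ^ 2 * ∑ C ∈ A.powersetCard k, (#(S ∩ C) : ℝ) * (#(S ∩ C) - 1)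
        + (#A - 2 * k * #S) * (#A * ∑ C ∈ A.powersetCard k, (#(S ∩ C) : ℝ))
        + ∑ C ∈ A.powersetCard k, ((k : ℝ) * #S) ^ 2 := by
    rw [mul_sum, mul_sum, mul_sum, ← sum_add_distrib, ← sum_add_distrib]
    exact sum_congr rfl fun C _ => by ring
  have : (0 : ℝ) ≤ #(A.powersetCard k) * #S ^ 2 * k := by positivity
  -- `n² Y = n (n - 1) Y + n Y` for `Y = ∑ X (X - 1)`; the last term is controlled by `X ≤ k`.
  rw [expand, first_moment, sum_const, nsmul_eq_mul]
  linarith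

theorem sum_sq_div_mul_card_inter_sub_le (hSA : S ⊆ A) {k : ℕ} (hk : k ≠ 0) :
    ∑ C ∈ A.powersetCard k, ((#A : ℝ) / k * #(S ∩ C) - #S) ^ 2
      ≤ #(A.powersetCard k) * #A * #S / k := by
  have hk' : (k : ℝ) ≠ 0 := Nat.cast_ne_zero.2 hk
  have hterm : ∀ C, ((#A : ℝ) / k * #(S ∩ C) - #S) ^ 2
      = ((#A : ℝ) * #(S ∩ C) - k * #S) ^ 2 / k ^ 2 := fun C => by field_simp
  rw [sum_congr rfl fun C _ => hterm C, ← sum_div, div_le_iff₀ (by positivity)]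
  calc _ ≤ (#(A.powersetCard k) : ℝ) * #A * #S * k := sum_sq_card_mul_card_inter_sub_le hSA k
    _ = _ := by field_simp

end Hypergeometric

section MulFiber

variable {G : Type*} [Group G] [DecidableEq G]

theorem card_filter_mul_eq_card_inter {A C : Finset G} (hCA : C ⊆ A) (B : Finset G) (x : G) :
    #{p ∈ C ×ˢ B | p.1 * p.2 = x} = #({a ∈ A | a⁻¹ * x ∈ B} ∩ C) := by
  refine card_nbij' Prod.fst (fun a => (a, a⁻¹ * x)) ?_ ?_ ?_ ?_
  · rintro ⟨a, b⟩ hab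
    simp only [coe_filter, mem_product, Set.mem_ofPred_eq] at hab
    obtain ⟨⟨ha, hb⟩, rfl⟩ := hab
    simp [hCA ha, ha, hb]
  · intro a ha
    simp_all
  · rintro ⟨a, b⟩ hab
    simp only [coe_filter, Set.mem_ofPred_eq] at hab
    simp [← hab.2]
  · intro a _
    rfl

theorem sum_card_filter_mul_eq (A B : Finset G) :
    ∑ x ∈ A * B, #{p ∈ A ×ˢ B | p.1 * p.2 = x} = #A * #B := by
  rw [← card_product, card_eq_sum_card_fiberwise fun p hp =>
    mul_mem_mul (mem_product.1 hp).1 (mem_product.1 hp).2]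

theorem sum_sq_div_mul_card_filter_mul_sub_le (A B : Finset G) {k : ℕ} (hk : k ≠ 0) (x : G) :
    ∑ C ∈ A.powersetCard k, ((#A : ℝ) / k * #{p ∈ C ×ˢ B | p.1 * p.2 = x}
        - #{p ∈ A ×ˢ B | p.1 * p.2 = x}) ^ 2
      ≤ #(A.powersetCard k) * #A * #{p ∈ A ×ˢ B | p.1 * p.2 = x} / k := by
  have hS : {a ∈ A | a⁻¹ * x ∈ B} ⊆ A := filter_subset _ _
  rw [card_filter_mul_eq_card_inter subset_rfl, inter_eq_left.2 hS]
  calc _ = ∑ C ∈ A.powersetCard k, ((#A : ℝ) / k * #({a ∈ A | a⁻¹ * x ∈ B} ∩ C)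
          - #{a ∈ A | a⁻¹ * x ∈ B}) ^ 2 :=
        sum_congr rfl fun C hC => by
          rw [card_filter_mul_eq_card_inter (mem_powersetCard.1 hC).1]
    _ ≤ _ := sum_sq_div_mul_card_inter_sub_le hS hk

end MulFiber

theorem stmt15_general {G : Type*} [Group G] [DecidableEq G] (A B : Finset G)
    (k : ℕ) (hk1 : 1 ≤ k) :
    (∑ C ∈ A.powersetCard k, ∑ x ∈ A * B,
          (((A.card : ℝ) / k) * (((C ×ˢ B).filter (fun p => p.1 * p.2 = x)).card : ℝ)
            - (((A ×ˢ B).filter (fun p => p.1 * p.2 = x)).card : ℝ)) ^ 2)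
        / ((A.powersetCard k).card : ℝ)
      ≤ (A.card : ℝ) ^ 2 * (B.card : ℝ) / k := by
  have hk : k ≠ 0 := Nat.one_le_iff_ne_zero.1 hk1
  refine div_le_of_le_mul₀ (by positivity) (by positivity) ?_
  rw [sum_comm]
  calc _ ≤ ∑ x ∈ A * B, (#(A.powersetCard k) : ℝ) * #A * #{p ∈ A ×ˢ B | p.1 * p.2 = x} / k :=
        sum_le_sum fun x _ => sum_sq_div_mul_card_filter_mul_sub_le A B hk x
    _ = (#(A.powersetCard k) : ℝ) * #A
          * (∑ x ∈ A * B, #{p ∈ A ×ˢ B | p.1 * p.2 = x} : ℕ) / k := by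
        rw [Nat.cast_sum, mul_sum, sum_div]
    _ = _ := by
        rw [sum_card_filter_mul_eq]
        push_cast
        ring

/-- For a uniformly random `k`-element subset `C ⊆ A`, with `μ_C = (|A|/k)·1_C`:
`E‖μ_C * 1_B - 1_A * 1_B‖₂² ≤ |A|²|B|/k`. -/
theorem stmt15 {G : Type*} [Group G] [DecidableEq G] (A B : Finset G) (hB : B.Nonempty)
    (k : ℕ) (hk1 : 1 ≤ k) (hk2 : k ≤ A.card) :
    (∑ C ∈ A.powersetCard k, ∑ x ∈ A * B,
          (((A.card : ℝ) / k) * (((C ×ˢ B).filter (fun p => p.1 * p.2 = x)).card : ℝ)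
            - (((A ×ˢ B).filter (fun p => p.1 * p.2 = x)).card : ℝ)) ^ 2)
        / ((A.powersetCard k).card : ℝ)
      ≤ (A.card : ℝ) ^ 2 * (B.card : ℝ) / k :=
  stmt15_general A B k hk1
end

section
/- Let G be a group, let A, B ⊆ G be finite subsets, and let ε ∈ (0,1). Suppose S ⊆ G is a finite nonempty set such that |S·A| ≤ K|A|. Then there exists a set T ⊆ S⁻¹ of size |T| ≥ |S|/(2K)^{9/ε²} such that for every t ∈ T·T⁻¹, Σ_{x∈G} |1_A*1_B(tx) - 1_A*1_B(x)|² ≤ ε²|A|²|B|. -/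
/-!
Write `1_A * 1_B(x) = ∑_{a ∈ A} 1_B(a⁻¹x)` and sample `c ∈ A^k` uniformly, `k = ⌈8/ε²⌉`. The
estimate `(|A|/k) ∑ᵢ 1_B(cᵢ⁻¹x)` is unbiased with total variance at most `|A|²|B|/k`, so by
Markov at least half of all samples are good: their squared `L²` error is at most `2|A|²|B|/k`.
Each good sample is `s⁻¹ • d` for every `s ∈ S` with `d = s • c ∈ (SA)^k`, so by pigeonhole a
single `d` makes `s⁻¹ • d` good for all `s` in some `T₀ ⊆ S` with `|T₀| ≥ |S|/(2K^k)`. The estimate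
from `s⁻¹ • d` is `x ↦ (estimate from d)(sx)`, so for `s₁, s₂ ∈ T₀` both
`1_A * 1_B` and its translate by `s₂⁻¹s₁` are close to the same estimate, and the triangle
inequality gives the error `4 · 2|A|²|B|/k ≤ ε²|A|²|B|`.
-/

open Finset Pointwise

section Sampling

variable {ι : Type*}

theorem sum_piFinset_succ {M : Type*} [AddCommMonoid M] (A : Finset ι) (k : ℕ)
    (F : (Fin (k + 1) → ι) → M) :
    ∑ c ∈ Fintype.piFinset (fun _ : Fin (k + 1) => A), F c
      = ∑ a ∈ A, ∑ c ∈ Fintype.piFinset (fun _ : Fin k => A), F (Fin.cons a c) := by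
  rw [← sum_product']
  exact (sum_equiv (Fin.consEquiv fun _ => ι) (by simp [Fin.forall_fin_succ]) fun _ _ => rfl).symm

theorem sum_piFinset_sum_sq {R : Type*} [CommRing R] (A : Finset ι) (h : ι → R)
    (hh : ∑ a ∈ A, h a = 0) (k : ℕ) :
    ∑ c ∈ Fintype.piFinset (fun _ : Fin k => A), (∑ i, h (c i)) ^ 2
      = k * #A ^ (k - 1) * ∑ a ∈ A, h a ^ 2 := by
  induction k with
  | zero => simp
  | succ k ih =>
    simp only [sum_piFinset_succ, Fin.sum_univ_succ, Fin.cons_zero, Fin.cons_succ, add_sq,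
      sum_add_distrib, ← mul_sum, mul_assoc, ← sum_mul, hh]
    rw [sum_const, ih, zero_mul, mul_zero, add_zero, sum_comm, sum_const,
      Fintype.card_piFinset_const, Nat.add_sub_cancel]
    rcases k with _ | k
    · simp
    · simp only [nsmul_eq_mul, Nat.add_sub_cancel, pow_succ]
      push_cast
      ring

variable {K : Type*} [Field K] [LinearOrder K] [IsStrictOrderedRing K]

theorem sum_piFinset_sq_sampleSum_sub_le (A : Finset ι) (u : ι → K) {k : ℕ} (hk : k ≠ 0) :
    ∑ c ∈ Fintype.piFinset (fun _ : Fin k => A), (#A / k * ∑ i, u (c i) - ∑ a ∈ A, u a) ^ 2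
      ≤ #A ^ (k + 1) / k * ∑ a ∈ A, u a ^ 2 := by
  obtain ⟨m, rfl⟩ : ∃ m, k = m + 1 := ⟨k - 1, by omega⟩
  rcases A.eq_empty_or_nonempty with rfl | hA
  · simp
  have hA : (#A : K) ≠ 0 := by exact_mod_cast hA.card_ne_zero
  obtain ⟨μ, hμ⟩ : ∃ μ : K, ∑ a ∈ A, u a = #A * μ := ⟨(∑ a ∈ A, u a) / #A, by field_simp⟩
  have hcentred : ∑ a ∈ A, (u a - μ) = 0 := by
    rw [sum_sub_distrib, sum_const, nsmul_eq_mul, hμ, sub_self]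
  have hsample : ∀ c : Fin (m + 1) → ι, #A / (m + 1 : ℕ) * ∑ i, u (c i) - ∑ a ∈ A, u a
      = #A / (m + 1 : ℕ) * ∑ i, (u (c i) - μ) := by
    intro c
    rw [sum_sub_distrib, sum_const, card_univ, Fintype.card_fin, nsmul_eq_mul, hμ]
    field_simp
  have hvariance : ∑ a ∈ A, (u a - μ) ^ 2 = ∑ a ∈ A, u a ^ 2 - #A * μ ^ 2 := by
    simp only [sub_sq, sum_add_distrib, sum_sub_distrib, mul_right_comm _ _ μ,
      ← mul_sum, sum_const, nsmul_eq_mul, hμ]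
    ring
  calc _ = (#A / (m + 1 : ℕ)) ^ 2 * ((m + 1 : ℕ) * #A ^ m * ∑ a ∈ A, (u a - μ) ^ 2) := by
        simp_rw [hsample, mul_pow, ← mul_sum, sum_piFinset_sum_sq A _ hcentred, Nat.add_sub_cancel]
    _ = #A ^ (m + 1 + 1) / (m + 1 : ℕ) * ∑ a ∈ A, (u a - μ) ^ 2 := by
        field_simp
        ring
    _ ≤ #A ^ (m + 1 + 1) / (m + 1 : ℕ) * ∑ a ∈ A, u a ^ 2 := by
        rw [hvariance]
        gcongr
        nlinarith [sq_nonneg μ, Nat.cast_nonneg (α := K) #A]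

end Sampling

section Averaging

variable {ι K : Type*} [Field K] [LinearOrder K] [IsStrictOrderedRing K]

theorem card_le_two_mul_card_filter_le (P : Finset ι) (F : ι → K) (θ : K)
    (hF : ∀ i ∈ P, 0 ≤ F i) (hsum : 2 * ∑ i ∈ P, F i ≤ #P * θ) :
    #P ≤ 2 * #{i ∈ P | F i ≤ θ} := by
  have hsplit := card_filter_add_card_filter_not (s := P) (fun i => F i ≤ θ)
  set M := {i ∈ P | ¬F i ≤ θ}
  by_contra! hlt
  have hM : M.Nonempty := card_pos.1 (by omega)
  have hMθ : #M * θ < ∑ i ∈ P, F i := calc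
    #M * θ = ∑ i ∈ M, θ := by rw [sum_const, nsmul_eq_mul]
    _ < ∑ i ∈ M, F i := sum_lt_sum_of_nonempty hM fun i hi => not_le.1 (mem_filter.1 hi).2
    _ ≤ ∑ i ∈ P, F i := sum_le_sum_of_subset_of_nonneg (filter_subset _ _) fun i hi _ => hF i hi
  have hθ : 0 ≤ θ := by
    have : (0 : K) < #P := by exact_mod_cast hM.card_pos.trans_le (card_le_card (filter_subset _ _))
    nlinarith [sum_nonneg hF]
  have : (#P : K) < 2 * #M := by exact_mod_cast (by omega : #P < 2 * #M)
  nlinarith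

end Averaging

section Pigeonhole

variable {G α : Type*} [Group G] [MulAction G α] [DecidableEq α]

theorem exists_card_mul_card_le_card_smul_mul_card_filter [Nonempty α] (S : Finset G)
    (L : Finset α) : ∃ y : α, #S * #L ≤ #(S • L) * #{s ∈ S | s⁻¹ • y ∈ L} := by
  rcases (S • L).eq_empty_or_nonempty with hSL | hSL
  · obtain rfl | rfl := smul_eq_empty.1 hSL <;> exact ⟨Classical.arbitrary α, by simp⟩
  have hfibres : ∑ y ∈ S • L, #{s ∈ S | s⁻¹ • y ∈ L} = #S * #L := by
    simp_rw [card_filter]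
    rw [sum_comm, ← smul_eq_mul, ← sum_const]
    refine sum_congr rfl fun s hs => ?_
    rw [← card_filter, ← card_smul_finset s L]
    congr 1
    ext y
    simp only [mem_filter, inv_smul_mem_iff, and_iff_right_iff_imp]
    exact fun hy => smul_finset_subset_smul hs hy
  obtain ⟨y, -, hy⟩ := exists_le_of_sum_le hSL (f := fun _ => #S * #L)
    (g := fun y => #(S • L) * #{s ∈ S | s⁻¹ • y ∈ L})
    (by rw [sum_const, ← mul_sum, hfibres, smul_eq_mul, mul_comm])
  exact ⟨y, hy⟩

end Pigeonhole

section RepresentationCounts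

variable {G : Type*} [Group G] [DecidableEq G]

theorem sum_comp_mul_left_le_of_eq_zero {F : G → ℝ} {W : Finset G} (hF : ∀ x, 0 ≤ F x)
    (hW : ∀ x ∉ W, F x = 0) (t : G) (Ω : Finset G) :
    ∑ x ∈ Ω, F (t * x) ≤ ∑ x ∈ W, F x := calc
  ∑ x ∈ Ω, F (t * x) = ∑ y ∈ t • Ω, F y := by
    rw [smul_finset_def, sum_image fun x _ y _ h => MulAction.injective t h]
    rfl
  _ ≤ ∑ y ∈ t • Ω ∪ W, F y := sum_le_sum_of_subset_of_nonneg subset_union_left fun y _ _ => hF y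
  _ = ∑ y ∈ W, F y := (sum_subset subset_union_right fun y _ hy => hW y hy).symm

variable (A B : Finset G)

/-- `1_A * 1_B (x)`. -/
noncomputable def repCount (x : G) : ℝ := #{p ∈ A ×ˢ B | p.1 * p.2 = x}

noncomputable def sampledRepCount {k : ℕ} (c : Fin k → G) (x : G) : ℝ :=
  #A / k * ∑ i, if (c i)⁻¹ * x ∈ B then 1 else 0

theorem repCount_eq_sum (x : G) : repCount A B x = ∑ a ∈ A, if a⁻¹ * x ∈ B then 1 else 0 := by
  rw [repCount, card_filter, Nat.cast_sum, sum_product]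
  refine sum_congr rfl fun a _ => ?_
  simp_rw [← eq_inv_mul_iff_mul_eq, Nat.cast_ite, Nat.cast_one, Nat.cast_zero]
  exact sum_ite_eq' B _ _

theorem repCount_eq_zero {x : G} (hx : x ∉ A * B) : repCount A B x = 0 := by
  rw [repCount, Nat.cast_eq_zero, card_eq_zero, filter_eq_empty_iff]
  rintro ⟨a, b⟩ hab rfl
  exact hx (mul_mem_mul (mem_product.1 hab).1 (mem_product.1 hab).2)

theorem sum_repCount : ∑ x ∈ A * B, repCount A B x = #A * #B := by
  rw [← Nat.cast_mul, ← card_product, card_eq_sum_card_fiberwise fun p hp =>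
    mul_mem_mul (mem_product.1 hp).1 (mem_product.1 hp).2, Nat.cast_sum]
  rfl

theorem sampledRepCount_eq_zero {k : ℕ} {c : Fin k → G} (hc : c ∈ Fintype.piFinset fun _ => A)
    {x : G} (hx : x ∉ A * B) : sampledRepCount A B c x = 0 := by
  refine mul_eq_zero_of_right _ (sum_eq_zero fun i _ => if_neg fun hxB => hx ?_)
  simpa using mul_mem_mul (Fintype.mem_piFinset.1 hc i) hxB

theorem sampledRepCount_smul {k : ℕ} (t : G) (c : Fin k → G) (x : G) :
    sampledRepCount A B (t • c) (t * x) = sampledRepCount A B c x := by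
  simp [sampledRepCount, mul_assoc]

end RepresentationCounts

section AlmostPeriodicity

variable {G : Type*} [Group G] [DecidableEq G] (A B : Finset G)

theorem sum_sum_sq_sampledRepCount_sub_le {k : ℕ} (hk : k ≠ 0) :
    ∑ c ∈ Fintype.piFinset (fun _ : Fin k => A), ∑ x ∈ A * B,
        (sampledRepCount A B c x - repCount A B x) ^ 2 ≤ #A ^ k * (#A ^ 2 * #B / k) := calc
  _ = ∑ x ∈ A * B, ∑ c ∈ Fintype.piFinset (fun _ : Fin k => A),
        (sampledRepCount A B c x - repCount A B x) ^ 2 := sum_comm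
  _ ≤ ∑ x ∈ A * B, #A ^ (k + 1) / k * repCount A B x := sum_le_sum fun x _ => by
        simpa [sampledRepCount, repCount_eq_sum, ite_pow] using
          sum_piFinset_sq_sampleSum_sub_le A (fun a => if a⁻¹ * x ∈ B then (1 : ℝ) else 0) hk
  _ = #A ^ k * (#A ^ 2 * #B / k) := by
        rw [← mul_sum, sum_repCount]
        ring

noncomputable def goodSamples (k : ℕ) (θ : ℝ) : Finset (Fin k → G) :=
  {c ∈ Fintype.piFinset (fun _ => A) |
    ∑ x ∈ A * B, (sampledRepCount A B c x - repCount A B x) ^ 2 ≤ θ}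

theorem card_pow_le_two_mul_card_goodSamples {k : ℕ} (hk : k ≠ 0) :
    #A ^ k ≤ 2 * #(goodSamples A B k (2 * (#A ^ 2 * #B / k))) := by
  rw [← Fintype.card_piFinset_const]
  refine card_le_two_mul_card_filter_le _ _ _ (fun c _ => sum_nonneg fun x _ => sq_nonneg _) ?_
  rw [Fintype.card_piFinset_const, Nat.cast_pow]
  linarith [sum_sum_sq_sampledRepCount_sub_le A B hk]

theorem sum_sq_sampledRepCount_sub_le_of_mem_goodSamples {k : ℕ} {θ : ℝ} {c : Fin k → G}
    (hc : c ∈ goodSamples A B k θ) (t : G) (Ω : Finset G) :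
    ∑ x ∈ Ω, (sampledRepCount A B c (t * x) - repCount A B (t * x)) ^ 2 ≤ θ := by
  refine (sum_comp_mul_left_le_of_eq_zero (fun _ => sq_nonneg _) (fun x hx => ?_) t Ω).trans
    (mem_filter.1 hc).2
  rw [sampledRepCount_eq_zero A B (mem_filter.1 hc).1 hx, repCount_eq_zero A B hx, sub_zero,
    sq, mul_zero]

theorem sum_sq_repCount_mul_sub_le {k : ℕ} {θ : ℝ} {c : Fin k → G} {t : G}
    (hc : c ∈ goodSamples A B k θ) (htc : t • c ∈ goodSamples A B k θ) (Ω : Finset G) :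
    ∑ x ∈ Ω, (repCount A B (t * x) - repCount A B x) ^ 2 ≤ 4 * θ := calc
  _ ≤ ∑ x ∈ Ω, 2 * ((sampledRepCount A B (t • c) (t * x) - repCount A B (t * x)) ^ 2
        + (sampledRepCount A B c (1 * x) - repCount A B (1 * x)) ^ 2) := by
      refine sum_le_sum fun x _ => ?_
      rw [sampledRepCount_smul, one_mul]
      nlinarith [add_sq_le (a := repCount A B (t * x) - sampledRepCount A B c x)
        (b := sampledRepCount A B c x - repCount A B x)]
  _ ≤ 2 * (θ + θ) := by
      rw [← mul_sum, sum_add_distrib]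
      gcongr
      exacts [sum_sq_sampledRepCount_sub_le_of_mem_goodSamples A B htc t Ω,
        sum_sq_sampledRepCount_sub_le_of_mem_goodSamples A B hc 1 Ω]
  _ = 4 * θ := by ring

theorem smul_subset_piFinset_mul {k : ℕ} (S : Finset G) {L : Finset (Fin k → G)}
    (hL : L ⊆ Fintype.piFinset fun _ => A) : S • L ⊆ Fintype.piFinset fun _ => S * A := by
  intro y hy
  obtain ⟨s, hs, c, hc, rfl⟩ := mem_smul.1 hy
  exact Fintype.mem_piFinset.2 fun i => mul_mem_mul hs (Fintype.mem_piFinset.1 (hL hc) i)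

theorem exists_large_set_of_almost_periods (S : Finset G) {k : ℕ} (hk : k ≠ 0) :
    ∃ T ⊆ S⁻¹, #S * #A ^ k ≤ 2 * #(S * A) ^ k * #T ∧
      ∀ t ∈ T * T⁻¹, ∀ Ω : Finset G,
        ∑ x ∈ Ω, (repCount A B (t * x) - repCount A B x) ^ 2 ≤ 8 / k * #A ^ 2 * #B := by
  set L := goodSamples A B k (2 * (#A ^ 2 * #B / k))
  obtain ⟨d, hd⟩ := exists_card_mul_card_le_card_smul_mul_card_filter S L
  refine ⟨{s ∈ S | s⁻¹ • d ∈ L}⁻¹, inv_subset_inv (filter_subset _ _), ?_, ?_⟩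
  · have hSL : #(S • L) ≤ #(S * A) ^ k := by
      rw [← Fintype.card_piFinset_const]
      exact card_le_card (smul_subset_piFinset_mul A S (filter_subset _ _))
    rw [card_inv]
    calc #S * #A ^ k ≤ #S * (2 * #L) := by gcongr; exact card_pow_le_two_mul_card_goodSamples A B hk
      _ = 2 * (#S * #L) := by ring
      _ ≤ 2 * (#(S • L) * #{s ∈ S | s⁻¹ • d ∈ L}) := by gcongr
      _ ≤ _ := by rw [mul_assoc]; gcongr
  · intro t ht Ω
    rw [inv_inv] at ht
    obtain ⟨u, hu, v, hv, rfl⟩ := mem_mul.1 ht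
    have huv : (u * v) • v⁻¹ • d ∈ L := by
      simpa [smul_smul] using (mem_filter.1 (mem_inv'.1 hu)).2
    refine (sum_sq_repCount_mul_sub_le A B (mem_filter.1 hv).2 huv Ω).trans (le_of_eq ?_)
    ring

end AlmostPeriodicity

theorem Nat.ceil_div_sq_le {ε : ℝ} (hε0 : 0 < ε) (hε1 : ε ≤ 1) {c : ℝ} (hc : 0 ≤ c) :
    (⌈c / ε ^ 2⌉₊ : ℝ) ≤ (c + 1) / ε ^ 2 := by
  have : 1 ≤ 1 / ε ^ 2 := one_le_one_div (by positivity) (pow_le_one₀ hε0.le hε1)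
  linarith [Nat.ceil_lt_add_one (div_nonneg hc (sq_nonneg ε)), add_div c 1 (ε ^ 2)]

theorem two_mul_pow_le_rpow {K r : ℝ} {k : ℕ} (hK : 1 ≤ K) (hkr : (k : ℝ) ≤ r) (hr : 1 ≤ r) :
    2 * K ^ k ≤ (2 * K) ^ r := by
  rw [Real.mul_rpow zero_le_two (by linarith), ← Real.rpow_natCast]
  gcongr
  exact Real.self_le_rpow_of_one_le one_le_two hr

theorem stmt16_general {G : Type*} [Group G] [DecidableEq G] (A B S : Finset G)
    (hA : A.Nonempty) (hS : S.Nonempty) (ε K : ℝ)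
    (hε0 : 0 < ε) (hε1 : ε < 1)
    (hK : (((S * A).card : ℝ)) ≤ K * A.card) :
    ∃ T : Finset G, T ⊆ S⁻¹ ∧
      (S.card : ℝ) / (2 * K) ^ ((9 : ℝ) / ε ^ 2) ≤ T.card ∧
      ∀ t ∈ T * T⁻¹,
        ∑ x ∈ (t⁻¹ • (A * B)) ∪ (A * B),
            ((((A ×ˢ B).filter (fun p => p.1 * p.2 = t * x)).card : ℝ)
              - (((A ×ˢ B).filter (fun p => p.1 * p.2 = x)).card : ℝ)) ^ 2
          ≤ ε ^ 2 * (A.card : ℝ) ^ 2 * (B.card : ℝ) := by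
  set k := ⌈8 / ε ^ 2⌉₊
  have hk8 : 8 ≤ ε ^ 2 * k := (div_le_iff₀' (by positivity)).1 (Nat.le_ceil _)
  have hk9 : (k : ℝ) ≤ 9 / ε ^ 2 := by
    simpa [show (8 : ℝ) + 1 = 9 by norm_num] using Nat.ceil_div_sq_le hε0 hε1.le (c := 8) (by norm_num)
  obtain ⟨T, hTS, hcard, hT⟩ := exists_large_set_of_almost_periods A B S (k := k) (by positivity)
  have hA0 : (0 : ℝ) < #A := by exact_mod_cast hA.card_pos
  have hK1 : 1 ≤ K := by
    have : (#A : ℝ) ≤ #(S * A) := by exact_mod_cast card_le_card_mul_left hS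
    nlinarith
  have hST : (#S : ℝ) ≤ 2 * K ^ k * #T := by
    refine le_of_mul_le_mul_right ?_ (pow_pos hA0 k)
    calc (#S : ℝ) * #A ^ k ≤ 2 * #(S * A) ^ k * #T := by exact_mod_cast hcard
      _ ≤ 2 * (K * #A) ^ k * #T := by gcongr
      _ = 2 * K ^ k * #T * #A ^ k := by ring
  have hK9 : 2 * K ^ k ≤ (2 * K) ^ ((9 : ℝ) / ε ^ 2) :=
    two_mul_pow_le_rpow hK1 hk9 ((one_le_div (by positivity)).2 (by nlinarith))
  refine ⟨T, hTS, ?_, fun t ht => (hT t ht _).trans ?_⟩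
  · rw [div_le_iff₀ (by positivity), mul_comm (#T : ℝ)]
    exact hST.trans (by gcongr)
  · gcongr
    rwa [div_le_iff₀ (by positivity)]

/-- `L²`-almost-periodicity (left-translate version): if `|S·A| ≤ K|A|` then there is
`T ⊆ S⁻¹` with `|T| ≥ |S|/(2K)^{9/ε²}` such that for every `t ∈ T·T⁻¹`,
`Σ_x |1_A*1_B(tx) - 1_A*1_B(x)|² ≤ ε²|A|²|B|`. -/
theorem stmt16 {G : Type*} [Group G] [DecidableEq G] (A B S : Finset G)
    (hA : A.Nonempty) (hB : B.Nonempty) (hS : S.Nonempty) (ε K : ℝ)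
    (hε0 : 0 < ε) (hε1 : ε < 1)
    (hK : (((S * A).card : ℝ)) ≤ K * A.card) :
    ∃ T : Finset G, T ⊆ S⁻¹ ∧
      (S.card : ℝ) / (2 * K) ^ ((9 : ℝ) / ε ^ 2) ≤ T.card ∧
      ∀ t ∈ T * T⁻¹,
        ∑ x ∈ (t⁻¹ • (A * B)) ∪ (A * B),
            ((((A ×ˢ B).filter (fun p => p.1 * p.2 = t * x)).card : ℝ)
              - (((A ×ˢ B).filter (fun p => p.1 * p.2 = x)).card : ℝ)) ^ 2
          ≤ ε ^ 2 * (A.card : ℝ) ^ 2 * (B.card : ℝ) :=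
  stmt16_general A B S hA hS ε K hε0 hε1 hK
end

section
/- Let G be a group, let A ⊆ G be a finite nonempty set with |A²| ≤ K|A|, and let k be a positive integer. Then there is a symmetric set S ⊆ A⁻¹A containing the identity such that S^k ⊆ A²·A⁻² and |S| ≥ exp(-9k²K log(2K))·|A|; moreover, every element of S^k has at least |A|³/(2K) representations as a₁a₂a₃⁻¹a₄⁻¹ with aᵢ ∈ A. -/
/-!
Let `f = 1_A ⋆ 1_A`. The number of representations of `t` is `∑ₓ f(tx) f(x)`, so
`‖f(t·) - f‖₂² = 2 (E - r(t))` with `E = ‖f‖₂² ≥ |A|³/K` by Cauchy–Schwarz. Let `S` consist of the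
`t ∈ A⁻¹A` with `‖f(t·) - f‖₂ ≤ √E / k`. It is symmetric, and by the triangle inequality every
element of `S^k` moves `f` by at most `√E`, hence has at least `E/2` representations.

`S` is large by the Croot–Sisask sampling argument. For a tuple `z ∈ A^m`, `m = ⌈8k²K⌉`, the count
`#{i | x ∈ zᵢA}` estimates `m f(x) / |A|`; since the summands are independent with mean zero, the
mean square error of `|A| · count - m f` over all tuples is at most `m|A|³`, so half of the tuples
are good. Translating a good tuple by `c ∈ A` gives a good estimate of `f(c⁻¹·)`. Pigeonholing the
`|A|^(m+1)/2` translated good tuples into the at most `(K|A|)^m` tuples of `(AA)^m` yields one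
tuple that estimates `f(c⁻¹·)` well for all `c` in a set `T` with `|T| ≥ |A|/(2Kᵐ)`, so that
`c⁻¹b ∈ S` for all `b, c ∈ T`.
-/

open Finset Pointwise Function

section L2

variable {α : Type*}

/-- `∑ᶠ` makes this `0` when `f` has infinite support. -/
noncomputable def l2Norm (f : α → ℝ) : ℝ := √(∑ᶠ x, f x ^ 2)

lemma l2Norm_nonneg (f : α → ℝ) : 0 ≤ l2Norm f := Real.sqrt_nonneg _

lemma sq_l2Norm (f : α → ℝ) : l2Norm f ^ 2 = ∑ᶠ x, f x ^ 2 :=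
  Real.sq_sqrt (finsum_nonneg fun _ => sq_nonneg _)

lemma l2Norm_const_mul (r : ℝ) (f : α → ℝ) : l2Norm (fun x => r * f x) = |r| * l2Norm f := by
  simp_rw [l2Norm, mul_pow, ← mul_finsum, Real.sqrt_mul (sq_nonneg r), Real.sqrt_sq_eq_abs]

lemma l2Norm_add_le {f g : α → ℝ} (hf : HasFiniteSupport f) (hg : HasFiniteSupport g) :
    l2Norm (fun x => f x + g x) ≤ l2Norm f + l2Norm g := by
  classical
  set s := (hf.union hg).toFinset
  have hsub : ∀ {h : α → ℝ}, support h ⊆ support f ∪ support g → support (fun x => h x ^ 2) ⊆ s :=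
    fun hh => by simpa [s, support_pow _ two_ne_zero] using hh
  rw [l2Norm, l2Norm, l2Norm, finsum_eq_sum_of_support_subset _ (hsub (support_add f g)),
    finsum_eq_sum_of_support_subset _ (hsub Set.subset_union_left),
    finsum_eq_sum_of_support_subset _ (hsub Set.subset_union_right), Real.sqrt_le_iff]
  refine ⟨by positivity, ?_⟩
  have hcs := Real.sum_mul_le_sqrt_mul_sqrt s f g
  have expand : ∑ x ∈ s, (f x + g x) ^ 2 =
      ∑ x ∈ s, f x ^ 2 + 2 * ∑ x ∈ s, f x * g x + ∑ x ∈ s, g x ^ 2 := by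
    simp only [add_sq, sum_add_distrib, mul_sum, mul_assoc]
  rw [expand, add_sq, Real.sq_sqrt (sum_nonneg fun _ _ => sq_nonneg _),
    Real.sq_sqrt (sum_nonneg fun _ _ => sq_nonneg _)]
  linarith

lemma l2Norm_sub_le_add {f g h : α → ℝ} (hf : HasFiniteSupport f) (hg : HasFiniteSupport g)
    (hh : HasFiniteSupport h) :
    l2Norm (fun x => f x - h x) ≤ l2Norm (fun x => f x - g x) + l2Norm (fun x => g x - h x) := by
  simpa using l2Norm_add_le (f := fun x => f x - g x) (g := fun x => g x - h x)
    (by fun_prop) (by fun_prop)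

lemma sq_l2Norm_sub {f g : α → ℝ} (hf : HasFiniteSupport f) (hg : HasFiniteSupport g) :
    l2Norm (fun x => f x - g x) ^ 2 = ∑ᶠ x, f x ^ 2 + ∑ᶠ x, g x ^ 2 - 2 * ∑ᶠ x, f x * g x := by
  have expand : ∀ x, (f x - g x) ^ 2 = f x * f x + g x * g x - 2 * (f x * g x) := fun x => by ring
  rw [sq_l2Norm, finsum_congr expand, finsum_sub_distrib (by fun_prop) (by fun_prop),
    finsum_add_distrib (by fun_prop) (by fun_prop), ← mul_finsum]
  simp only [sq]

lemma l2Norm_sub_comm (f g : α → ℝ) :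
    l2Norm (fun x => f x - g x) = l2Norm (fun x => g x - f x) := by
  simp only [l2Norm, sub_sq_comm]

end L2

section Translate

variable {G : Type*} [Group G]

lemma Function.HasFiniteSupport.comp_mul_left {f : G → ℝ} (hf : HasFiniteSupport f) (c : G) :
    HasFiniteSupport (fun x => f (c * x)) :=
  hf.fun_comp_of_injective (mul_right_injective c)

lemma finsum_comp_mul_left (f : G → ℝ) (c : G) : ∑ᶠ x, f (c * x) = ∑ᶠ x, f x :=
  finsum_comp_equiv (Equiv.mulLeft c)

lemma l2Norm_comp_mul_left (f : G → ℝ) (c : G) : l2Norm (fun x => f (c * x)) = l2Norm f :=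
  congrArg Real.sqrt (finsum_comp_mul_left (fun y => f y ^ 2) c)

/-- `t` is an `ε`-almost period of `f` when this is at most `ε`. -/
noncomputable def translateDist (f : G → ℝ) (t : G) : ℝ := l2Norm fun x => f (t * x) - f x

variable {f : G → ℝ}

lemma translateDist_nonneg (t : G) : 0 ≤ translateDist f t := l2Norm_nonneg _

lemma translateDist_one : translateDist f 1 = 0 := by simp [translateDist, l2Norm]

lemma translateDist_inv (t : G) : translateDist f t⁻¹ = translateDist f t := by
  rw [translateDist, ← l2Norm_comp_mul_left _ t, l2Norm_sub_comm]
  simp only [inv_mul_cancel_left, translateDist]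

lemma translateDist_mul_le (hf : HasFiniteSupport f) (s t : G) :
    translateDist f (s * t) ≤ translateDist f s + translateDist f t := by
  have hs : l2Norm (fun x => f (s * t * x) - f (t * x)) = translateDist f s := by
    rw [translateDist, ← l2Norm_comp_mul_left (fun y => f (s * y) - f y) t]
    simp only [mul_assoc]
  rw [translateDist, ← hs]
  exact l2Norm_sub_le_add (hf.comp_mul_left _) (hf.comp_mul_left _) hf

lemma translateDist_le_of_mem_pow [DecidableEq G] {S : Finset G} {ε : ℝ} (hf : HasFiniteSupport f)
    (hS : ∀ s ∈ S, translateDist f s ≤ ε) :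
    ∀ k : ℕ, ∀ t ∈ S ^ k, translateDist f t ≤ k * ε
  | 0, t, ht => by simp_all [translateDist_one]
  | k + 1, _, ht => by
    obtain ⟨u, hu, s, hs, rfl⟩ := mem_mul.1 (pow_succ S k ▸ ht)
    calc translateDist f (u * s) ≤ translateDist f u + translateDist f s :=
          translateDist_mul_le hf u s
      _ ≤ k * ε + ε := add_le_add (translateDist_le_of_mem_pow hf hS k u hu) (hS s hs)
      _ = (k + 1 : ℕ) * ε := by push_cast; ring

lemma sq_translateDist (hf : HasFiniteSupport f) (t : G) :
    translateDist f t ^ 2 = 2 * (∑ᶠ x, f x ^ 2 - ∑ᶠ x, f (t * x) * f x) := by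
  have shift : ∑ᶠ x, f (t * x) ^ 2 = ∑ᶠ x, f x ^ 2 := finsum_comp_mul_left (fun y => f y ^ 2) t
  rw [translateDist, sq_l2Norm_sub (hf.comp_mul_left t) hf, shift]
  ring

lemma finsum_sq_le_two_mul_finsum_mul_of_translateDist_le (hf : HasFiniteSupport f) {t : G}
    (ht : translateDist f t ≤ √(∑ᶠ x, f x ^ 2)) : ∑ᶠ x, f x ^ 2 ≤ 2 * ∑ᶠ x, f (t * x) * f x := by
  have h := pow_le_pow_left₀ (translateDist_nonneg t) ht 2
  rw [sq_translateDist hf, Real.sq_sqrt (finsum_nonneg fun _ => sq_nonneg _)] at h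
  linarith

lemma inv_filter_translateDist_le [DecidableEq G] {U : Finset G} (hU : U⁻¹ = U) (ε : ℝ) :
    {t ∈ U | translateDist f t ≤ ε}⁻¹ = {t ∈ U | translateDist f t ≤ ε} := by
  ext t
  simp [hU, translateDist_inv]

end Translate

section Convolution

variable {G : Type*} [Group G] [DecidableEq G]

lemma convolution_eq_card_filter (X Y : Finset G) (x : G) :
    X.convolution Y x = #{a ∈ X | a⁻¹ * x ∈ Y} := by
  rw [← card_inter_smul_inv]
  congr 1
  ext a
  simp [← inv_smul_mem_iff]

lemma support_convolution_subset (X Y : Finset G) :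
    support (fun x => (X.convolution Y x : ℝ)) ⊆ ↑(X * Y) := fun x hx =>
  mem_coe.2 (by simpa [convolution_ne_zero] using hx)

lemma hasFiniteSupport_convolution (X Y : Finset G) :
    HasFiniteSupport (fun x => (X.convolution Y x : ℝ)) :=
  (X * Y).finite_toSet.subset (support_convolution_subset X Y)

lemma sum_convolution (X Y : Finset G) : ∑ x ∈ X * Y, X.convolution Y x = #X * #Y := by
  rw [← card_product]
  exact (card_eq_sum_card_fiberwise fun p hp =>
    mul_mem_mul (mem_product.1 hp).1 (mem_product.1 hp).2).symm

lemma sq_card_mul_card_le_card_mul_mul_finsum_convolution_sq (X Y : Finset G) :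
    ((#X : ℝ) * #Y) ^ 2 ≤ #(X * Y) * ∑ᶠ x, (X.convolution Y x : ℝ) ^ 2 := by
  have h := sq_sum_le_card_mul_sum_sq (s := X * Y) (f := fun x => (X.convolution Y x : ℝ))
  rw [← Nat.cast_sum, sum_convolution, Nat.cast_mul] at h
  rwa [finsum_eq_sum_of_support_subset _
    ((support_pow _ two_ne_zero).trans_subset (support_convolution_subset X Y))]

lemma card_filter_swap_eq_convolution (X Y : Finset G) (x : G) :
    #{p ∈ X ×ˢ Y | p.2 * p.1 = x} = Y.convolution X x :=
  card_equiv (Equiv.prodComm _ _) (by simp [and_comm])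

lemma card_filter_eq_finsum_convolution_mul_convolution (A : Finset G) (t : G) :
    (#{q ∈ (A ×ˢ A) ×ˢ (A ×ˢ A) | q.1.1 * q.1.2 * q.2.1⁻¹ * q.2.2⁻¹ = t} : ℝ) =
      ∑ᶠ x, (A.convolution A (t * x) : ℝ) * A.convolution A x := by
  have fiber : ∀ x, {q ∈ {q ∈ (A ×ˢ A) ×ˢ (A ×ˢ A) | q.1.1 * q.1.2 * q.2.1⁻¹ * q.2.2⁻¹ = t} |
      q.2.2 * q.2.1 = x} = {p ∈ A ×ˢ A | p.1 * p.2 = t * x} ×ˢ {p ∈ A ×ˢ A | p.2 * p.1 = x} := by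
    intro x; ext ⟨⟨a, b⟩, c, d⟩
    simp only [mem_filter, mem_product]
    constructor
    · rintro ⟨⟨⟨hab, hcd⟩, rfl⟩, rfl⟩
      exact ⟨⟨hab, by group⟩, hcd, rfl⟩
    · rintro ⟨⟨hab, h⟩, hcd, rfl⟩
      exact ⟨⟨⟨hab, hcd⟩, by rw [h]; group⟩, rfl⟩
  rw [card_eq_sum_card_fiberwise (f := fun q => q.2.2 * q.2.1) (t := A * A) ?_,
    finsum_eq_sum_of_support_subset _
      ((support_mul_subset_right _ _).trans (support_convolution_subset A A))]
  · push_cast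
    simp only [fiber, card_product, card_filter_swap_eq_convolution, card_mul_eq, Nat.cast_mul]
  · intro q hq
    obtain ⟨⟨-, hc, hd⟩, -⟩ := by simpa using hq
    exact mul_mem_mul hd hc

end Convolution

section Sampling

lemma sum_piFinset_sq_sum_of_sum_eq_zero {α ι : Type*} [Fintype ι] [DecidableEq ι] (s : Finset α)
    {a : α → ℝ} (ha : ∑ v ∈ s, a v = 0) :
    ∑ z ∈ Fintype.piFinset (fun _ : ι => s), (∑ i, a (z i)) ^ 2 =
      Fintype.card ι * #s ^ (Fintype.card ι - 1) * ∑ v ∈ s, a v ^ 2 := by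
  have cross : ∀ i j, i ≠ j → ∑ z ∈ Fintype.piFinset (fun _ : ι => s), a (z i) * a (z j) = 0 := by
    intro i j hij
    have := sum_prod_piFinset s fun l v => (if l = i then a v else 1) * (if l = j then a v else 1)
    simp only [prod_mul_distrib, Fintype.prod_ite_eq'] at this
    rw [this]
    exact prod_eq_zero (mem_univ i) (by simp [hij, ha])
  calc ∑ z ∈ Fintype.piFinset (fun _ : ι => s), (∑ i, a (z i)) ^ 2
      = ∑ i, ∑ j, ∑ z ∈ Fintype.piFinset (fun _ : ι => s), a (z i) * a (z j) := by
        simp_rw [sq, sum_mul_sum]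
        rw [sum_comm]
        exact sum_congr rfl fun i _ => sum_comm
    _ = ∑ i, ∑ z ∈ Fintype.piFinset (fun _ : ι => s), a (z i) ^ 2 := by
        refine sum_congr rfl fun i _ => ?_
        rw [sum_eq_single i (fun j _ hji => cross i j hji.symm) (by simp)]
        simp_rw [sq]
    _ = _ := by
        simp [Fintype.sum_piFinset_apply (fun v => a v ^ 2), mul_assoc]

lemma card_le_two_mul_card_filter_le_of_sum_le {ι : Type*} {s : Finset ι} {φ : ι → ℝ} {μ : ℝ}
    (hμ : 0 < μ) (hsum : ∑ i ∈ s, φ i ≤ #s * μ) (hφ : ∀ i ∈ s, 0 ≤ φ i) :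
    (#s : ℝ) ≤ 2 * #{i ∈ s | φ i ≤ 2 * μ} := by
  have hbad : (#{i ∈ s | ¬ φ i ≤ 2 * μ} : ℝ) * (2 * μ) ≤ #s * μ :=
    calc (#{i ∈ s | ¬ φ i ≤ 2 * μ} : ℝ) * (2 * μ) = #{i ∈ s | ¬ φ i ≤ 2 * μ} • (2 * μ) :=
          (nsmul_eq_mul _ _).symm
      _ ≤ ∑ i ∈ s with ¬ φ i ≤ 2 * μ, φ i :=
          card_nsmul_le_sum _ _ _ fun i hi => (not_le.1 (mem_filter.1 hi).2).le
      _ ≤ ∑ i ∈ s, φ i := sum_le_sum_of_subset_of_nonneg (filter_subset _ _) fun i hi _ => hφ i hi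
      _ ≤ #s * μ := hsum
  have hsplit : (#{i ∈ s | φ i ≤ 2 * μ} : ℝ) + #{i ∈ s | ¬ φ i ≤ 2 * μ} = #s := by
    exact_mod_cast card_filter_add_card_filter_not _
  nlinarith

variable {G : Type*} [Group G] [DecidableEq G] {ι : Type*} [Fintype ι]

/-- Sampling `X` by the values of `z` turns `X.convolution Y x = #{a ∈ X | a⁻¹ * x ∈ Y}`
into this count. -/
def tupleConvolution (z : ι → G) (Y : Finset G) (x : G) : ℕ := #{i | (z i)⁻¹ * x ∈ Y}

lemma tupleConvolution_inv_smul (c : G) (z : ι → G) (Y : Finset G) (x : G) :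
    tupleConvolution (c⁻¹ • z) Y x = tupleConvolution z Y (c * x) := by
  simp [tupleConvolution, mul_assoc]

lemma support_tupleConvolution_subset (z : ι → G) (Y : Finset G) :
    support (fun x => (tupleConvolution z Y x : ℝ)) ⊆ ↑(univ.image z * Y) := by
  intro x hx
  have : ({i | (z i)⁻¹ * x ∈ Y} : Finset ι).Nonempty := by
    rw [← card_ne_zero]
    simpa [tupleConvolution] using hx
  obtain ⟨i, hi⟩ := this
  replace hi := (mem_filter.1 hi).2
  exact mem_coe.2 (mem_mul.2 ⟨z i, mem_image_of_mem z (mem_univ i), _, hi, mul_inv_cancel_left _ _⟩)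

noncomputable def sampleError (X Y : Finset G) (z : ι → G) (x : G) : ℝ :=
  #X * tupleConvolution z Y x - Fintype.card ι * X.convolution Y x

lemma support_sampleError_subset [DecidableEq ι] {X Y : Finset G} {z : ι → G}
    (hz : z ∈ Fintype.piFinset fun _ => X) : support (sampleError X Y z) ⊆ ↑(X * Y) := by
  have hzX : univ.image z ⊆ X := image_subset_iff.2 fun i _ => Fintype.mem_piFinset.1 hz i
  refine (support_sub _ _).trans (Set.union_subset ?_ ?_)
  · exact (support_mul_subset_right _ _).trans ((support_tupleConvolution_subset z Y).trans
      (coe_subset.2 (mul_subset_mul_right hzX)))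
  · exact (support_mul_subset_right _ _).trans (support_convolution_subset X Y)

lemma sum_piFinset_sampleError_sq [DecidableEq ι] (X Y : Finset G) (x : G) :
    ∑ z ∈ Fintype.piFinset (fun _ : ι => X), sampleError X Y z x ^ 2 =
      Fintype.card ι * #X ^ (Fintype.card ι - 1) *
        (#X * X.convolution Y x * (#X - X.convolution Y x)) := by
  set n : ℝ := ↑(#X)
  set f : ℝ := ↑(X.convolution Y x)
  set e : G → ℝ := fun a => if a⁻¹ * x ∈ Y then 1 else 0
  have hf : f = ∑ a ∈ X, e a := by
    simp only [f, e]
    rw [convolution_eq_card_filter, natCast_card_filter]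
  have hz : ∀ z : ι → G, sampleError X Y z x = ∑ i, (n * e (z i) - f) := fun z => by
    rw [sum_sub_distrib, ← mul_sum, sum_const, card_univ, nsmul_eq_mul, sampleError,
      tupleConvolution, natCast_card_filter]
  have hcomplement : (#{a ∈ X | a⁻¹ * x ∉ Y} : ℝ) = n - f := by
    have := card_filter_add_card_filter_not (s := X) (fun a => a⁻¹ * x ∈ Y)
    rw [← convolution_eq_card_filter] at this
    simp only [n, f, ← this]
    push_cast
    ring
  have hsq : ∀ a, (n * e a - f) ^ 2 = if a⁻¹ * x ∈ Y then (n - f) ^ 2 else f ^ 2 := fun a => by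
    simp only [e]
    split_ifs <;> ring
  simp_rw [hz]
  rw [sum_piFinset_sq_sum_of_sum_eq_zero X (a := fun v => n * e v - f)]
  · simp only [hsq, sum_ite, sum_const, nsmul_eq_mul, ← convolution_eq_card_filter, hcomplement]
    ring
  · rw [sum_sub_distrib, ← mul_sum, ← hf, sum_const, nsmul_eq_mul]
    ring

lemma sum_sq_l2Norm_sampleError_le [DecidableEq ι] (X Y : Finset G) :
    ∑ z ∈ Fintype.piFinset (fun _ : ι => X), l2Norm (sampleError X Y z) ^ 2 ≤
      Fintype.card ι * #X ^ (Fintype.card ι + 2) * #Y := by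
  set c := Fintype.card ι
  set n : ℝ := ↑(#X)
  have hpow : (c : ℝ) * n ^ (c - 1) * n ^ 2 = c * n ^ (c + 1) := by
    rcases eq_or_ne c 0 with h | h
    · simp [h]
    · rw [mul_assoc, ← pow_add]
      congr 2
      omega
  have hterm : ∀ x, (c : ℝ) * n ^ (c - 1) * (n * X.convolution Y x * (n - X.convolution Y x)) ≤
      c * n ^ (c + 1) * X.convolution Y x := fun x => by
    calc (c : ℝ) * n ^ (c - 1) * (n * X.convolution Y x * (n - X.convolution Y x))
        = c * n ^ (c - 1) * n ^ 2 * X.convolution Y x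
          - c * n ^ (c - 1) * n * (X.convolution Y x : ℝ) ^ 2 := by ring
      _ ≤ c * n ^ (c - 1) * n ^ 2 * X.convolution Y x := sub_le_self _ (by positivity)
      _ = c * n ^ (c + 1) * X.convolution Y x := by rw [hpow]
  calc ∑ z ∈ Fintype.piFinset (fun _ : ι => X), l2Norm (sampleError X Y z) ^ 2
      = ∑ z ∈ Fintype.piFinset (fun _ : ι => X), ∑ x ∈ X * Y, sampleError X Y z x ^ 2 :=
        sum_congr rfl fun z hz => by
          rw [sq_l2Norm, finsum_eq_sum_of_support_subset _
            ((support_pow _ two_ne_zero).trans_subset (support_sampleError_subset hz))]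
    _ = ∑ x ∈ X * Y, c * n ^ (c - 1) * (n * X.convolution Y x * (n - X.convolution Y x)) := by
        rw [sum_comm]
        exact sum_congr rfl fun x _ => sum_piFinset_sampleError_sq X Y x
    _ ≤ ∑ x ∈ X * Y, c * n ^ (c + 1) * X.convolution Y x := sum_le_sum fun x _ => hterm x
    _ = c * n ^ (c + 2) * #Y := by
        rw [← mul_sum, ← Nat.cast_sum, sum_convolution]
        push_cast
        ring

lemma card_pow_le_two_mul_card_filter_sampleError [DecidableEq ι] [Nonempty ι] {X Y : Finset G}
    (hX : X.Nonempty) (hY : Y.Nonempty) :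
    (#X ^ Fintype.card ι : ℝ) ≤ 2 * #{z ∈ Fintype.piFinset (fun _ : ι => X) |
      l2Norm (sampleError X Y z) ^ 2 ≤ 2 * (Fintype.card ι * #X ^ 2 * #Y)} := by
  have hcard : (#(Fintype.piFinset fun _ : ι => X) : ℝ) = #X ^ Fintype.card ι := by
    simp [Fintype.card_piFinset]
  have := hX.card_pos
  have := hY.card_pos
  have := Fintype.card_pos (α := ι)
  rw [← hcard]
  refine card_le_two_mul_card_filter_le_of_sum_le (by positivity) ?_ fun _ _ => sq_nonneg _
  rw [hcard]
  exact (sum_sq_l2Norm_sampleError_le X Y).trans_eq (by ring)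

lemma exists_card_mul_card_le_card_filter_inv_smul_mem [DecidableEq ι] {C X : Finset G}
    (hC : C.Nonempty) (hX : X.Nonempty) {Z : Finset (ι → G)}
    (hZ : Z ⊆ Fintype.piFinset fun _ => X) :
    ∃ w : ι → G, (#C * #Z : ℝ) ≤ #{c ∈ C | c⁻¹ • w ∈ Z} * #(C * X) ^ Fintype.card ι := by
  set W := Fintype.piFinset fun _ : ι => C * X
  have hW : (#W : ℝ) = #(C * X) ^ Fintype.card ι := by simp [W, Fintype.card_piFinset]
  have hWpos : (0 : ℝ) < #W := by
    exact_mod_cast (Fintype.piFinset_nonempty.2 fun _ => hC.mul hX).card_pos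
  obtain ⟨w, -, hw⟩ := exists_le_card_fiber_of_nsmul_le_card_of_maps_to
    (s := C ×ˢ Z) (t := W) (f := fun p => p.1 • p.2) (b := (#C * #Z : ℝ) / #W)
    (fun p hp => by
      obtain ⟨hc, hz⟩ := mem_product.1 hp
      exact Fintype.mem_piFinset.2 fun i => smul_mem_smul hc (Fintype.mem_piFinset.1 (hZ hz) i))
    (Fintype.piFinset_nonempty.2 fun _ => hC.mul hX)
    (by rw [nsmul_eq_mul, card_product, Nat.cast_mul, mul_div_cancel₀ _ hWpos.ne'])
  have hfiber : #{p ∈ C ×ˢ Z | p.1 • p.2 = w} ≤ #{c ∈ C | c⁻¹ • w ∈ Z} := by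
    refine card_le_card_of_injOn Prod.fst (fun p hp => ?_) (fun p hp q hq hpq => ?_)
    · obtain ⟨hpCZ, rfl⟩ := mem_filter.1 hp
      obtain ⟨hc, hz⟩ := mem_product.1 hpCZ
      simpa [hc] using hz
    · obtain ⟨-, hpw⟩ := mem_filter.1 hp
      obtain ⟨-, hqw⟩ := mem_filter.1 hq
      refine Prod.ext hpq ?_
      rw [← inv_smul_smul p.1 p.2, ← inv_smul_smul q.1 q.2, hpw, hqw, hpq]
  refine ⟨w, ?_⟩
  rw [← hW, ← div_le_iff₀ hWpos]
  exact hw.trans (by exact_mod_cast hfiber)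

lemma card_mul_translateDist_convolution_le {X Y : Finset G} {w : ι → G} {b c : G} {r : ℝ}
    (hb : l2Norm (sampleError X Y (b⁻¹ • w)) ≤ r) (hc : l2Norm (sampleError X Y (c⁻¹ • w)) ≤ r) :
    Fintype.card ι * translateDist (fun x => (X.convolution Y x : ℝ)) (c⁻¹ * b) ≤ 2 * r := by
  set m : ℝ := ↑(Fintype.card ι)
  set f : G → ℝ := fun x => X.convolution Y x
  set g : G → ℝ := fun x => #X * tupleConvolution w Y x
  have hf : HasFiniteSupport f := hasFiniteSupport_convolution X Y
  have hg : HasFiniteSupport g :=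
    ((univ.image w * Y).finite_toSet.subset (support_tupleConvolution_subset w Y)).subset
      (support_mul_subset_right _ _)
  have hsample : ∀ d, sampleError X Y (d⁻¹ • w) = fun x => g (d * x) - m * f x := fun d => by
    ext x
    simp [sampleError, tupleConvolution_inv_smul, g, f, m]
  have h1 : l2Norm (sampleError X Y (c⁻¹ • w)) =
      l2Norm (fun x => m * f (c⁻¹ * b * x) - g (b * x)) := by
    rw [hsample, ← l2Norm_comp_mul_left _ (c⁻¹ * b), l2Norm_sub_comm]
    simp only [mul_assoc, mul_inv_cancel_left]
  have h2 : l2Norm (fun x => m * f (c⁻¹ * b * x) - m * f x) = m * translateDist f (c⁻¹ * b) := by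
    have := l2Norm_const_mul m fun x => f (c⁻¹ * b * x) - f x
    rw [abs_of_nonneg (by positivity)] at this
    rw [translateDist, ← this]
    simp only [mul_sub]
  have := l2Norm_sub_le_add (f := fun x => m * f (c⁻¹ * b * x)) (g := fun x => g (b * x))
    (h := fun x => m * f x) ((hf.comp_mul_left _).subset (support_mul_subset_right _ _))
    (hg.comp_mul_left b) (by fun_prop)
  rw [← h1, h2, ← hsample] at this
  linarith

theorem exists_large_set_translateDist_convolution_le [DecidableEq ι] [Nonempty ι]
    {X Y C : Finset G} (hX : X.Nonempty) (hY : Y.Nonempty) (hC : C.Nonempty) :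
    ∃ T ⊆ C, (#C * #X ^ Fintype.card ι : ℝ) ≤ 2 * #T * #(C * X) ^ Fintype.card ι ∧
      ∀ b ∈ T, ∀ c ∈ T, Fintype.card ι *
        translateDist (fun x => (X.convolution Y x : ℝ)) (c⁻¹ * b) ^ 2 ≤ 8 * #X ^ 2 * #Y := by
  set thr : ℝ := 2 * (Fintype.card ι * #X ^ 2 * #Y)
  set Z := {z ∈ Fintype.piFinset (fun _ : ι => X) | l2Norm (sampleError X Y z) ^ 2 ≤ thr}
  obtain ⟨w, hw⟩ :=
    exists_card_mul_card_le_card_filter_inv_smul_mem hC hX (Z := Z) (filter_subset _ _)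
  refine ⟨{c ∈ C | c⁻¹ • w ∈ Z}, filter_subset _ _, ?_, fun b hb c hc => ?_⟩
  · have hZ : (#X ^ Fintype.card ι : ℝ) ≤ 2 * #Z :=
      card_pow_le_two_mul_card_filter_sampleError hX hY
    calc (#C * #X ^ Fintype.card ι : ℝ) ≤ #C * (2 * #Z) := by gcongr
      _ = 2 * (#C * #Z) := by ring
      _ ≤ 2 * (#{c ∈ C | c⁻¹ • w ∈ Z} * #(C * X) ^ Fintype.card ι) := by gcongr
      _ = _ := by ring
  · have hgood : ∀ d ∈ {c ∈ C | c⁻¹ • w ∈ Z}, l2Norm (sampleError X Y (d⁻¹ • w)) ≤ √thr :=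
      fun d hd => (Real.le_sqrt (l2Norm_nonneg _) (by positivity)).2
        (mem_filter.1 (mem_filter.1 hd).2).2
    have h := pow_le_pow_left₀ (mul_nonneg (Nat.cast_nonneg _) (translateDist_nonneg _))
      (card_mul_translateDist_convolution_le (hgood b hb) (hgood c hc)) 2
    rw [mul_pow, mul_pow, Real.sq_sqrt (by positivity)] at h
    have hm : (0 : ℝ) < Fintype.card ι := by exact_mod_cast Fintype.card_pos
    refine le_of_mul_le_mul_left ?_ hm
    linarith

end Sampling

section Main

variable {G : Type*} [Group G] [DecidableEq G]

lemma one_le_of_card_mul_le {A : Finset G} (hA : A.Nonempty) {K : ℝ}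
    (hK : (#(A * A) : ℝ) ≤ K * #A) : 1 ≤ K := by
  have h : (#A : ℝ) ≤ #(A * A) := by exact_mod_cast card_le_card_mul_right hA
  have : (0 : ℝ) < #A := by exact_mod_cast hA.card_pos
  nlinarith

lemma card_pow_three_div_le_finsum_convolution_sq {A : Finset G} (hA : A.Nonempty) {K : ℝ}
    (hK : (#(A * A) : ℝ) ≤ K * #A) : (#A : ℝ) ^ 3 / K ≤ ∑ᶠ x, (A.convolution A x : ℝ) ^ 2 := by
  have hK0 : 0 < K := zero_lt_one.trans_le (one_le_of_card_mul_le hA hK)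
  have hA0 : (0 : ℝ) < #A := by exact_mod_cast hA.card_pos
  have h := sq_card_mul_card_le_card_mul_mul_finsum_convolution_sq A A
  rw [div_le_iff₀ hK0]
  nlinarith [finsum_nonneg fun x => sq_nonneg (A.convolution A x : ℝ)]

lemma exp_neg_mul_log_two_mul_le {K M : ℝ} {m : ℕ} (hK : 1 ≤ K) (hm : 1 ≤ m) (hmM : m ≤ M) :
    Real.exp (-(M * Real.log (2 * K))) ≤ (2 * K ^ m)⁻¹ := by
  rw [Real.exp_neg]
  refine inv_anti₀ (by positivity) ?_
  calc 2 * K ^ m ≤ (2 * K) ^ m := by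
        rw [mul_pow]
        gcongr
        exact le_self_pow₀ one_le_two (by omega)
    _ = Real.exp (m * Real.log (2 * K)) := by
        rw [← Real.log_pow, Real.exp_log (by positivity)]
    _ ≤ Real.exp (M * Real.log (2 * K)) := by
        gcongr
        exact Real.log_nonneg (by linarith)

lemma card_le_card_of_inv_mul_subset {T S : Finset G} (h : T⁻¹ * T ⊆ S) : #T ≤ #S := by
  rcases T.eq_empty_or_nonempty with rfl | hT
  · simp
  · exact (card_le_card_mul_left hT.inv).trans (card_le_card h)

lemma translateDist_le_sqrt_div_of_card_mul_sq_le {A : Finset G} (hA : A.Nonempty) {K : ℝ}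
    (hK : (#(A * A) : ℝ) ≤ K * #A) {k m : ℕ} (hk : 1 ≤ k) (hm : 8 * (k : ℝ) ^ 2 * K ≤ m) {t : G}
    (ht : m * translateDist (fun x => (A.convolution A x : ℝ)) t ^ 2 ≤ 8 * #A ^ 2 * #A) :
    translateDist (fun x => (A.convolution A x : ℝ)) t ≤
      √(∑ᶠ x, (A.convolution A x : ℝ) ^ 2) / k := by
  have hK0 : 0 < K := zero_lt_one.trans_le (one_le_of_card_mul_le hA hK)
  have hk0 : (0 : ℝ) < k := by exact_mod_cast hk
  set τ := translateDist (fun x => (A.convolution A x : ℝ)) t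
  have hτ : (k : ℝ) ^ 2 * τ ^ 2 ≤ (#A : ℝ) ^ 3 / K := by
    rw [le_div_iff₀ hK0]
    nlinarith [mul_le_mul_of_nonneg_right hm (sq_nonneg τ)]
  rw [le_div_iff₀ hk0, Real.le_sqrt (mul_nonneg (translateDist_nonneg _) hk0.le)
    (finsum_nonneg fun _ => sq_nonneg _)]
  linarith [card_pow_three_div_le_finsum_convolution_sq hA hK]

lemma exp_mul_card_le_card_filter_translateDist_le {A : Finset G} (hA : A.Nonempty) {K : ℝ}
    (hK : (#(A * A) : ℝ) ≤ K * #A) {k : ℕ} (hk : 1 ≤ k) :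
    Real.exp (-(9 * (k : ℝ) ^ 2 * K * Real.log (2 * K))) * #A ≤
      #{t ∈ A⁻¹ * A | translateDist (fun x => (A.convolution A x : ℝ)) t ≤
        √(∑ᶠ x, (A.convolution A x : ℝ) ^ 2) / k} := by
  have hK1 := one_le_of_card_mul_le hA hK
  have hA0 : (0 : ℝ) < #A := by exact_mod_cast hA.card_pos
  set m := ⌈8 * (k : ℝ) ^ 2 * K⌉₊
  have hm8 : 8 * (k : ℝ) ^ 2 * K ≤ m := Nat.le_ceil _
  have hkK : 1 ≤ (k : ℝ) ^ 2 * K :=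
    one_le_mul_of_one_le_of_one_le (one_le_pow₀ (by exact_mod_cast hk)) hK1
  have hm9 : (m : ℝ) ≤ 9 * (k : ℝ) ^ 2 * K := by
    have := Nat.ceil_lt_add_one (by positivity : 0 ≤ 8 * (k : ℝ) ^ 2 * K)
    linarith
  have hm1 : 1 ≤ m := by exact_mod_cast (by linarith : (1 : ℝ) ≤ m)
  have : Nonempty (Fin m) := ⟨⟨0, hm1⟩⟩
  obtain ⟨T, hTA, hTcard, hT⟩ := exists_large_set_translateDist_convolution_le (ι := Fin m) hA hA hA
  simp only [Fintype.card_fin] at hTcard hT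
  have hT_card : (#A : ℝ) ≤ 2 * K ^ m * #T := by
    refine le_of_mul_le_mul_right ?_ (by positivity : (0 : ℝ) < #A ^ m)
    calc (#A : ℝ) * #A ^ m ≤ 2 * #T * #(A * A) ^ m := hTcard
      _ ≤ 2 * #T * (K * #A) ^ m := by gcongr
      _ = 2 * K ^ m * #T * #A ^ m := by ring
  have hTS : T⁻¹ * T ⊆ {t ∈ A⁻¹ * A | translateDist (fun x => (A.convolution A x : ℝ)) t ≤
      √(∑ᶠ x, (A.convolution A x : ℝ) ^ 2) / k} := by
    intro x hx
    obtain ⟨c', hc', b, hb, rfl⟩ := mem_mul.1 hx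
    obtain ⟨c, hc, rfl⟩ : ∃ c ∈ T, c⁻¹ = c' := ⟨c'⁻¹, by simpa using hc', inv_inv c'⟩
    refine mem_filter.2 ⟨mul_mem_mul (inv_mem_inv (hTA hc)) (hTA hb), ?_⟩
    exact translateDist_le_sqrt_div_of_card_mul_sq_le hA hK hk hm8 (hT b hb c hc)
  calc Real.exp (-(9 * (k : ℝ) ^ 2 * K * Real.log (2 * K))) * #A ≤ (2 * K ^ m)⁻¹ * #A := by
        gcongr
        exact exp_neg_mul_log_two_mul_le hK1 hm1 hm9
    _ ≤ #T := by rwa [inv_mul_le_iff₀ (by positivity)]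
    _ ≤ _ := by exact_mod_cast card_le_card_of_inv_mul_subset hTS

lemma card_pow_three_div_le_card_filter_of_mem_pow {A : Finset G} (hA : A.Nonempty) {K : ℝ}
    (hK : (#(A * A) : ℝ) ≤ K * #A) {k : ℕ} (hk : 1 ≤ k) {S : Finset G}
    (hS : ∀ s ∈ S, translateDist (fun x => (A.convolution A x : ℝ)) s ≤
      √(∑ᶠ x, (A.convolution A x : ℝ) ^ 2) / k) :
    ∀ t ∈ S ^ k, (#A : ℝ) ^ 3 / (2 * K) ≤
      #{q ∈ (A ×ˢ A) ×ˢ (A ×ˢ A) | q.1.1 * q.1.2 * q.2.1⁻¹ * q.2.2⁻¹ = t} := by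
  intro t ht
  have hf := hasFiniteSupport_convolution A A
  have hτ := translateDist_le_of_mem_pow hf hS k t ht
  rw [mul_div_cancel₀ _ (by positivity)] at hτ
  have := finsum_sq_le_two_mul_finsum_mul_of_translateDist_le hf hτ
  rw [card_filter_eq_finsum_convolution_mul_convolution,
    show (#A : ℝ) ^ 3 / (2 * K) = #A ^ 3 / K / 2 by ring]
  linarith [card_pow_three_div_le_finsum_convolution_sq hA hK]

lemma mem_mul_mul_inv_mul_inv_of_card_pos {A : Finset G} {t : G}
    (h : 0 < #{q ∈ (A ×ˢ A) ×ˢ (A ×ˢ A) | q.1.1 * q.1.2 * q.2.1⁻¹ * q.2.2⁻¹ = t}) :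
    t ∈ A * A * A⁻¹ * A⁻¹ := by
  obtain ⟨⟨⟨a, b⟩, c, d⟩, hq⟩ := card_pos.1 h
  obtain ⟨⟨⟨ha, hb⟩, hc, hd⟩, rfl⟩ := by simpa using hq
  exact mul_mem_mul (mul_mem_mul (mul_mem_mul ha hb) (inv_mem_inv hc)) (inv_mem_inv hd)

end Main

/-- If `|A²| ≤ K|A|` then there is a symmetric set `S ⊆ A⁻¹A` containing the identity with
`S^k ⊆ A²·A⁻²` and `|S| ≥ exp(-9k²K log(2K))|A|`, and every element of `S^k` has at least
`|A|³/(2K)` representations as `a₁a₂a₃⁻¹a₄⁻¹` with `aᵢ ∈ A`. -/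
theorem stmt17 {G : Type*} [Group G] [DecidableEq G] (A : Finset G) (hA : A.Nonempty)
    (K : ℝ) (hK : (((A * A).card : ℝ)) ≤ K * A.card) (k : ℕ) (hk : 1 ≤ k) :
    ∃ S : Finset G, S ⊆ A⁻¹ * A ∧ S⁻¹ = S ∧ (1 : G) ∈ S ∧
      (S ^ k : Finset G) ⊆ A * A * A⁻¹ * A⁻¹ ∧
      Real.exp (-(9 * (k : ℝ) ^ 2 * K * Real.log (2 * K))) * A.card ≤ S.card ∧
      ∀ t ∈ S ^ k, (A.card : ℝ) ^ 3 / (2 * K) ≤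
        (((((A ×ˢ A) ×ˢ (A ×ˢ A)).filter
          (fun q => q.1.1 * q.1.2 * q.2.1⁻¹ * q.2.2⁻¹ = t)).card : ℝ)) := by
  have hK0 : 0 < K := zero_lt_one.trans_le (one_le_of_card_mul_le hA hK)
  set f : G → ℝ := fun x => A.convolution A x
  set S := {t ∈ A⁻¹ * A | translateDist f t ≤ √(∑ᶠ x, f x ^ 2) / k}
  have hrep := card_pow_three_div_le_card_filter_of_mem_pow hA hK hk (S := S)
    fun s hs => (mem_filter.1 hs).2
  refine ⟨S, filter_subset _ _, inv_filter_translateDist_le (by simp [mul_inv_rev]) _,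
    mem_filter.2 ⟨one_mem_inv_mul_iff.2 (by simpa using hA.ne_empty),
      translateDist_one.trans_le (by positivity)⟩,
    fun t ht => mem_mul_mul_inv_mul_inv_of_card_pos ?_,
    exp_mul_card_le_card_filter_translateDist_le hA hK hk, hrep⟩
  exact_mod_cast (by positivity : (0 : ℝ) < #A ^ 3 / (2 * K)).trans_le (hrep t ht)
end
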